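/- arXiv:math/0506363 — 4 statements merged into one kernel-verified Lean document; each statement's English description precedes it below -/
import Mathlib

section
/- Let (X,d) be a metric space, let b > 0, and suppose X is uniformly b-connected at scale ≤ E₁ with constant E₂ ≥ E₁ (i.e. any two points x, y with d(x,y) ≤ E₁ are joined by a b-chain contained in B(x,E₂)). Let h ≥ 2b. Then for every subset A ⊆ X and every point x ∈ Aᶜ with d(x,A) < E₁ (and likewise for every x ∈ A with d(x,Aᶜ) < E₁), there exists a point z ∈ X with d(x,z) ≤ E₂ such that the open ball B(z,b) is entirely contained in the h-boundary ∂_h A. -/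
open Metric MeasureTheory Set

noncomputable section

variable {X : Type*}

/-- The closed `h`-neighborhood `A_h = {x : d(x,A) ≤ h}` of a set `A`. -/
def nbhd [MetricSpace X] (A : Set X) (h : ℝ) : Set X := {x | Metric.infDist x A ≤ h}

/-- The `h`-boundary `∂_h A = A_h ∩ (Aᶜ)_h` of a set `A`. -/
def hBdry [MetricSpace X] (A : Set X) (h : ℝ) : Set X := nbhd A h ∩ nbhd Aᶜ h

/-- There is a `b`-chain from `x` to `y` entirely contained in `S`. -/
def ChainIn [MetricSpace X] (b : ℝ) (S : Set X) (x y : X) : Prop :=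
  ∃ (n : ℕ) (c : ℕ → X), c 0 = x ∧ c n = y ∧ (∀ i < n, dist (c i) (c (i + 1)) ≤ b) ∧
    ∀ i ≤ n, c i ∈ S

/-- `X` is uniformly `b`-connected at scale `≤ E₁` with constant `E₂`: any two points at
distance `≤ E₁` are joined by a `b`-chain contained in the ball `B(x, E₂)`. -/
def UnifConnAtScale (X : Type*) [MetricSpace X] (b E₁ E₂ : ℝ) : Prop :=
  ∀ x y : X, dist x y ≤ E₁ → ChainIn b (Metric.ball x E₂) x y

/-- Crossing lemma: a predicate false at 0 and true at n flips somewhere. -/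
lemma exists_crossing {P : ℕ → Prop} : ∀ n : ℕ, ¬ P 0 → P n → ∃ k < n, ¬ P k ∧ P (k + 1) := by
  intro n
  induction n with
  | zero => intro h0 hn; exact absurd hn h0
  | succ m ih =>
    intro h0 hn
    by_cases hm : P m
    · obtain ⟨k, hk, hPk⟩ := ih h0 hm
      exact ⟨k, hk.trans (Nat.lt_succ_self m), hPk⟩
    · exact ⟨m, Nat.lt_succ_self m, hm, hn⟩

/-- The one-sided version of the theorem. -/
lemma boundary_aux
    [MetricSpace X] (b E₁ E₂ h : ℝ) (hb : 0 < b) (hE : E₂ ≥ E₁)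
    (hconn : UnifConnAtScale X b E₁ E₂) (hh : 2 * b ≤ h)
    (A : Set X) (x : X) (hxA : x ∈ Aᶜ) (hxd : Metric.infDist x A < E₁) :
    ∃ z : X, dist x z ≤ E₂ ∧ Metric.ball z b ⊆ hBdry A h := by
  have hE₁pos : 0 < E₁ := lt_of_le_of_lt Metric.infDist_nonneg hxd
  have hE₂pos : 0 < E₂ := lt_of_lt_of_le hE₁pos hE
  rcases A.eq_empty_or_nonempty with rfl | hA
  · refine ⟨x, by simp [le_of_lt hE₂pos], fun w _ => ?_⟩
    have h0 : (0:ℝ) ≤ h := le_trans (by positivity) hh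
    refine ⟨by simp [nbhd, Metric.infDist_empty, h0], ?_⟩
    show Metric.infDist w (∅:Set X)ᶜ ≤ h
    rw [Set.compl_empty]
    exact le_trans (Metric.infDist_le_dist_of_mem (Set.mem_univ w)) (by simpa using h0)
  · obtain ⟨y, hyA, hxy⟩ := (Metric.infDist_lt_iff hA).mp hxd
    obtain ⟨n, c, hc0, hcn, hstep, hmem⟩ := hconn x y hxy.le
    have h0 : ¬ (c 0 ∈ A) := by rw [hc0]; exact hxA
    have hn : c n ∈ A := by rw [hcn]; exact hyA
    obtain ⟨k, hk, hck, hck1⟩ := exists_crossing (P := fun i => c i ∈ A) n h0 hn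
    have hck : c k ∈ Aᶜ := hck
    have hck1 : c (k+1) ∈ A := hck1
    refine ⟨c k, ?_, fun w hw => ?_⟩
    · have := hmem k hk.le
      rw [Metric.mem_ball, dist_comm] at this
      exact this.le
    · rw [Metric.mem_ball] at hw
      constructor
      · have : dist w (c (k+1)) ≤ h := by
          calc dist w (c (k+1)) ≤ dist w (c k) + dist (c k) (c (k+1)) := dist_triangle _ _ _
            _ ≤ b + b := add_le_add hw.le (hstep k hk)
            _ ≤ h := by linarith
        exact le_trans (Metric.infDist_le_dist_of_mem hck1) this
      · have : dist w (c k) ≤ h := by linarith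
        exact le_trans (Metric.infDist_le_dist_of_mem hck) this

theorem boundary_contains_ball_near_point
    [MetricSpace X] (b E₁ E₂ h : ℝ) (hb : 0 < b) (hE : E₂ ≥ E₁)
    (hconn : UnifConnAtScale X b E₁ E₂) (hh : 2 * b ≤ h)
    (A : Set X) (x : X)
    (hx : (x ∈ Aᶜ ∧ Metric.infDist x A < E₁) ∨ (x ∈ A ∧ Metric.infDist x Aᶜ < E₁)) :
    ∃ z : X, dist x z ≤ E₂ ∧ Metric.ball z b ⊆ hBdry A h := by
  rcases hx with ⟨hxA, hxd⟩ | ⟨hxA, hxd⟩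
  · exact boundary_aux b E₁ E₂ h hb hE hconn hh A x hxA hxd
  · obtain ⟨z, hz, hball⟩ := boundary_aux b E₁ E₂ h hb hE hconn hh Aᶜ x (by simpa) hxd
    refine ⟨z, hz, fun w hw => ?_⟩
    have := hball hw
    rw [hBdry, compl_compl] at this
    exact ⟨this.2, this.1⟩
end
end

section
/- Let (X,d,μ) be a metric measure space satisfying (DV)_loc and uniformly b-connected for some b > 0. Then for all h, h' ≥ 2b the profiles I_h and I_{h'} are equivalent: I_h ≈ I_{h'}, i.e. there exist constants C₁, C₂, C₃, C₄ > 0 such that C₁ I_{h'}(C₂ t) ≤ I_h(t) ≤ C₃ I_{h'}(C₄ t) for all t > 0. -/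
open Metric MeasureTheory Set ENNReal NNReal

noncomputable section

variable {X : Type*}

/-- `X` is uniformly `b`-connected. -/
def UnifConn (X : Type*) [MetricSpace X] (b : ℝ) : Prop :=
  ∀ E₁ > (0 : ℝ), ∃ E₂ ≥ E₁, ∀ x y : X, dist x y ≤ E₁ → ChainIn b (Metric.ball x E₂) x y

/-- Property `(DV)_loc`: doubling at fixed radius. -/
def DVloc [MetricSpace X] [MeasurableSpace X] (μ : Measure X) : Prop :=
  ∀ r > (0 : ℝ), ∃ C : ℝ≥0, 0 < C ∧
    ∀ x : X, μ (Metric.ball x (2 * r)) ≤ (C : ℝ≥0∞) * μ (Metric.ball x r)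

/-- The `h`-profile `I_h(t) = inf {μ(∂_h A) : A measurable, μ A < ∞, μ A ≥ t}`. -/
def profile [MetricSpace X] [MeasurableSpace X] (μ : Measure X) (h : ℝ) (t : ℝ≥0∞) : ℝ≥0∞ :=
  ⨅ (A : Set X) (_ : MeasurableSet A) (_ : μ A ≠ ∞) (_ : t ≤ μ A), μ (hBdry A h)

/-- Under `(DV)_loc`, if some ball is null then the whole measure vanishes. -/
lemma measure_eq_zero_of_ball_null [MetricSpace X] [MeasurableSpace X] {μ : Measure X}
    (hDV : DVloc μ) {x : X} {r : ℝ} (hr : 0 < r) (h0 : μ (Metric.ball x r) = 0) : μ = 0 := by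
  have key : ∀ n : ℕ, μ (Metric.ball x (2 ^ n * r)) = 0 := by
    intro n
    induction n with
    | zero => simpa using h0
    | succ n ih =>
      obtain ⟨C, -, hC⟩ := hDV (2 ^ n * r) (by positivity)
      have := hC x
      rw [ih, mul_zero] at this
      have h2 : (2 : ℝ) ^ (n + 1) * r = 2 * (2 ^ n * r) := by ring
      rw [h2]
      exact le_antisymm this (by positivity)
  have huniv : (univ : Set X) ⊆ ⋃ n : ℕ, Metric.ball x (2 ^ n * r) := by
    intro y _
    obtain ⟨n, hn⟩ := pow_unbounded_of_one_lt (dist y x / r) (one_lt_two (α := ℝ))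
    exact mem_iUnion.2 ⟨n, by simpa [Metric.mem_ball] using (div_lt_iff₀ hr).mp hn⟩
  have : μ univ = 0 :=
    le_antisymm (le_trans (measure_mono huniv) (le_of_eq (measure_iUnion_null key))) (by positivity)
  exact Measure.measure_univ_eq_zero.mp this

/-- Iterated doubling: comparison of balls of radius `r` and `s`. -/
lemma doubling_iterate [MetricSpace X] [MeasurableSpace X] {μ : Measure X}
    (hDV : DVloc μ) {s : ℝ} (hs : 0 < s) (r : ℝ) :
    ∃ C : ℝ≥0, 0 < C ∧ ∀ x : X, μ (Metric.ball x r) ≤ (C : ℝ≥0∞) * μ (Metric.ball x s) := by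
  have key : ∀ n : ℕ, ∃ C : ℝ≥0, 0 < C ∧
      ∀ x : X, μ (Metric.ball x (2 ^ n * s)) ≤ (C : ℝ≥0∞) * μ (Metric.ball x s) := by
    intro n
    induction n with
    | zero => exact ⟨1, one_pos, fun x => by simp⟩
    | succ n ih =>
      obtain ⟨C, hC, hCle⟩ := ih
      obtain ⟨C', hC', hC'le⟩ := hDV (2 ^ n * s) (by positivity)
      refine ⟨C' * C, mul_pos hC' hC, fun x => ?_⟩
      have h2 : (2 : ℝ) ^ (n + 1) * s = 2 * (2 ^ n * s) := by ring
      calc μ (Metric.ball x (2 ^ (n + 1) * s)) = μ (Metric.ball x (2 * (2 ^ n * s))) := by rw [h2]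
        _ ≤ (C' : ℝ≥0∞) * μ (Metric.ball x (2 ^ n * s)) := hC'le x
        _ ≤ (C' : ℝ≥0∞) * ((C : ℝ≥0∞) * μ (Metric.ball x s)) :=
            mul_le_mul_right (hCle x) _
        _ = ((C' * C : ℝ≥0) : ℝ≥0∞) * μ (Metric.ball x s) := by
            rw [ENNReal.coe_mul, mul_assoc]
  obtain ⟨n, hn⟩ := pow_unbounded_of_one_lt (r / s) (one_lt_two (α := ℝ))
  obtain ⟨C, hC, hCle⟩ := key n
  refine ⟨C, hC, fun x => ?_⟩
  have hrs : r < 2 ^ n * s := (div_lt_iff₀ hs).mp hn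
  exact le_trans (measure_mono (Metric.ball_subset_ball hrs.le)) (hCle x)

/-- Key geometric lemma: for a nonempty set `A`, the `h'`-boundary has measure controlled
by the `h`-boundary, uniformly in `A`. -/
lemma key_bdry_le [MetricSpace X] [MeasurableSpace X] [BorelSpace X] (μ : Measure X)
    [SigmaFinite μ] {b : ℝ} (hb : 0 < b) (hDV : DVloc μ) (hconn : UnifConn X b)
    {h h' : ℝ} (hh : 2 * b ≤ h) (hh' : 2 * b ≤ h') :
    ∃ D : ℝ≥0, 0 < D ∧ ∀ A : Set X, A.Nonempty →
      μ (hBdry A h') ≤ (D : ℝ≥0∞) * μ (hBdry A h) := by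
  have hb' : (0 : ℝ) < 2 * (h' + b) := by nlinarith
  obtain ⟨E₂, hE₂ge, hE₂⟩ := hconn (2 * (h' + b)) hb'
  set R : ℝ := h' + b + E₂ + 2 * b + 1 with hR
  have hE₂pos : 0 < E₂ := lt_of_lt_of_le hb' hE₂ge
  have hRb : b ≤ R := by nlinarith
  obtain ⟨D₀, hD₀, hD₀le⟩ := doubling_iterate hDV hb R
  refine ⟨max D₀ 1, lt_of_lt_of_le one_pos (le_max_right _ _), fun A hA => ?_⟩
  by_cases hμ : μ = 0
  · simp [hμ]
  by_cases hAc : Aᶜ.Nonempty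
  swap
  · -- A = univ : both boundaries are the whole space
    have hAu : A = univ := by
      rw [← compl_empty_iff]; exact not_nonempty_iff_eq_empty.mp hAc
    have hbd : ∀ k : ℝ, 2 * b ≤ k → hBdry A k = univ := by
      intro k hk
      apply eq_univ_of_forall
      intro y
      constructor
      · show infDist y A ≤ k
        rw [hAu, infDist_zero_of_mem (mem_univ y)]; nlinarith
      · show infDist y Aᶜ ≤ k
        rw [hAu, compl_univ, infDist_empty]; nlinarith
    rw [hbd h' hh', hbd h hh]
    calc μ univ = 1 * μ univ := (one_mul _).symm
      _ ≤ ((max D₀ 1 : ℝ≥0) : ℝ≥0∞) * μ univ := by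
          gcongr
          exact_mod_cast le_max_right D₀ 1
  -- positive measure of all balls
  have hpos : ∀ (x : X) (r : ℝ), 0 < r → 0 < μ (Metric.ball x r) := by
    intro x r hr
    rcases eq_or_lt_of_le (show 0 ≤ μ (Metric.ball x r) by positivity) with h0 | h0
    · exact absurd (measure_eq_zero_of_ball_null hDV hr h0.symm) hμ
    · exact h0
  -- the set of "crossing" points
  set Z : Set X := {z | infDist z A ≤ b ∧ infDist z Aᶜ ≤ b} with hZ
  -- crossing lemma
  have cross : ∀ x ∈ hBdry A h', ∃ z ∈ Z, dist x z < h' + b + E₂ := by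
    intro x hx
    obtain ⟨hx1, hx2⟩ := hx
    have hx1' : infDist x A < h' + b := lt_of_le_of_lt hx1 (by linarith)
    have hx2' : infDist x Aᶜ < h' + b := lt_of_le_of_lt hx2 (by linarith)
    obtain ⟨a, haA, hxa⟩ := (infDist_lt_iff hA).mp hx1'
    obtain ⟨a', ha'A, hxa'⟩ := (infDist_lt_iff hAc).mp hx2'
    have hdist : dist a a' ≤ 2 * (h' + b) := by
      calc dist a a' ≤ dist a x + dist x a' := dist_triangle _ _ _
        _ ≤ 2 * (h' + b) := by rw [dist_comm a x]; linarith
    obtain ⟨n, c, hc0, hcn, hstep, hmem⟩ := hE₂ a a' hdist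
    classical
    have hex : ∃ i, c i ∈ Aᶜ := ⟨n, by rw [hcn]; exact ha'A⟩
    set i := Nat.find hex with hi
    have hiC : c i ∈ Aᶜ := Nat.find_spec hex
    have hin : i ≤ n := Nat.find_min' hex (by rw [hcn]; exact ha'A)
    have hi0 : i ≠ 0 := by
      intro h0
      rw [h0] at hiC
      rw [hc0] at hiC
      exact hiC haA
    have hprev : c (i - 1) ∈ A := by
      by_contra hcon
      have := Nat.find_min' hex hcon
      omega
    refine ⟨c i, ⟨?_, ?_⟩, ?_⟩
    · -- infDist (c i) A ≤ b
      have hsucc : (i - 1) + 1 = i := Nat.succ_pred_eq_of_ne_zero hi0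
      have hlt : i - 1 < n := by omega
      have := hstep (i - 1) hlt
      rw [hsucc] at this
      calc infDist (c i) A ≤ dist (c i) (c (i - 1)) := infDist_le_dist_of_mem hprev
        _ = dist (c (i - 1)) (c i) := dist_comm _ _
        _ ≤ b := this
    · rw [infDist_zero_of_mem hiC]; linarith
    · have hball : c i ∈ Metric.ball a E₂ := hmem i hin
      calc dist x (c i) ≤ dist x a + dist a (c i) := dist_triangle _ _ _
        _ < (h' + b) + E₂ := by
            have : dist a (c i) < E₂ := by
              rw [dist_comm]; exact Metric.mem_ball.mp hball
            linarith
  -- maximal 2b-separated subset of Z via Zorn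
  have hzorn : ∃ F, Maximal (fun F => F ⊆ Z ∧ F.Pairwise (fun u v => 2 * b ≤ dist u v)) F := by
    apply zorn_subset
    intro c hc hchain
    refine ⟨⋃₀ c, ⟨?_, ?_⟩, fun s hs => subset_sUnion_of_mem hs⟩
    · exact sUnion_subset fun s hs => (hc hs).1
    · intro u hu v hv huv
      obtain ⟨s, hs, hus⟩ := hu
      obtain ⟨s', hs', hvs'⟩ := hv
      rcases hchain.total hs hs' with hss | hss
      · exact (hc hs').2 (hss hus) hvs' huv
      · exact (hc hs).2 hus (hss hvs') huv
  obtain ⟨F, hFmax⟩ := hzorn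
  obtain ⟨hFZ, hFsep⟩ := hFmax.1
  -- every point of Z is within 2b of F
  have hFnet : ∀ z ∈ Z, ∃ w ∈ F, dist z w < 2 * b := by
    intro z hz
    by_contra hcon
    push_neg at hcon
    have hzF : z ∉ F := by
      intro hzF
      have := hcon z hzF
      simp at this
      nlinarith
    have hins : insert z F ⊆ Z ∧ (insert z F).Pairwise (fun u v => 2 * b ≤ dist u v) := by
      constructor
      · exact insert_subset hz hFZ
      · apply hFsep.insert
        intro v hv hvz
        constructor
        · exact hcon v hv
        · rw [dist_comm]; exact hcon v hv
    have := hFmax.2 hins (subset_insert z F) (mem_insert z F)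
    exact hzF this
  -- covering of the h'-boundary
  have hcover : hBdry A h' ⊆ ⋃ w ∈ F, Metric.ball w R := by
    intro x hx
    obtain ⟨z, hz, hxz⟩ := cross x hx
    obtain ⟨w, hwF, hzw⟩ := hFnet z hz
    refine mem_biUnion hwF ?_
    have : dist x w ≤ dist x z + dist z w := dist_triangle _ _ _
    rw [Metric.mem_ball]
    rw [hR]
    nlinarith
  -- small balls around F are disjoint and contained in the h-boundary
  have hsmall : ∀ w ∈ F, Metric.ball w b ⊆ hBdry A h := by
    intro w hwF y hy
    rw [Metric.mem_ball] at hy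
    obtain ⟨hw1, hw2⟩ := hFZ hwF
    constructor
    · show infDist y A ≤ h
      calc infDist y A ≤ infDist w A + dist y w := infDist_le_infDist_add_dist
        _ ≤ b + b := by linarith
        _ ≤ h := by linarith
    · show infDist y Aᶜ ≤ h
      calc infDist y Aᶜ ≤ infDist w Aᶜ + dist y w := infDist_le_infDist_add_dist
        _ ≤ b + b := by linarith
        _ ≤ h := by linarith
  have hdisj : Pairwise (Function.onFun Disjoint fun w : F => Metric.ball (w : X) b) := by
    intro u v huv
    have hsep : 2 * b ≤ dist (u : X) (v : X) :=
      hFsep u.2 v.2 (fun hc => huv (Subtype.ext hc))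
    apply Metric.ball_disjoint_ball
    linarith
  -- F is countable
  have hFcount : F.Countable := by
    have := Measure.countable_meas_pos_of_disjoint_iUnion
      (μ := μ) (As := fun w : F => Metric.ball (w : X) b)
      (fun w => measurableSet_ball) hdisj
    have heq : {w : F | 0 < μ (Metric.ball (w : X) b)} = univ := by
      apply eq_univ_of_forall
      intro w
      exact hpos _ _ hb
    rw [heq, countable_univ_iff] at this
    exact countable_coe_iff.mp this
  -- chain of inequalities
  calc μ (hBdry A h') ≤ μ (⋃ w ∈ F, Metric.ball w R) := measure_mono hcover
    _ ≤ ∑' w : F, μ (Metric.ball (w : X) R) := measure_biUnion_le μ hFcount _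
    _ ≤ ∑' w : F, (D₀ : ℝ≥0∞) * μ (Metric.ball (w : X) b) :=
        ENNReal.tsum_le_tsum fun w => hD₀le _
    _ = (D₀ : ℝ≥0∞) * ∑' w : F, μ (Metric.ball (w : X) b) := ENNReal.tsum_mul_left
    _ ≤ (D₀ : ℝ≥0∞) * μ (⋃ w : F, Metric.ball (w : X) b) :=
        mul_le_mul_right (tsum_meas_le_meas_iUnion_of_disjoint μ
          (fun w => measurableSet_ball) hdisj) _
    _ ≤ (D₀ : ℝ≥0∞) * μ (hBdry A h) := by
        apply mul_le_mul_right
        apply measure_mono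
        exact iUnion_subset fun w => hsmall _ w.2
    _ ≤ ((max D₀ 1 : ℝ≥0) : ℝ≥0∞) * μ (hBdry A h) := by
        gcongr
        exact_mod_cast le_max_left D₀ 1

/-- Profile comparison from the key boundary lemma. -/
lemma profile_le_of_bdry_le [MetricSpace X] [MeasurableSpace X] (μ : Measure X)
    {h h' : ℝ} {D : ℝ≥0} (hD : 0 < D)
    (hkey : ∀ A : Set X, A.Nonempty → μ (hBdry A h') ≤ (D : ℝ≥0∞) * μ (hBdry A h))
    {t : ℝ≥0∞} (ht : 0 < t) : profile μ h' t ≤ (D : ℝ≥0∞) * profile μ h t := by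
  have hD0 : (D : ℝ≥0∞) ≠ 0 := by exact_mod_cast hD.ne'
  have hDt : (D : ℝ≥0∞) ≠ ∞ := ENNReal.coe_ne_top
  have hdiv : profile μ h' t / (D : ℝ≥0∞) ≤ profile μ h t := by
    rw [profile]
    refine le_iInf fun A => le_iInf fun hAm => le_iInf fun hAfin => le_iInf fun hAt => ?_
    rw [ENNReal.div_le_iff_le_mul (Or.inl hD0) (Or.inl hDt)]
    have hA : A.Nonempty := by
      apply nonempty_of_measure_ne_zero (μ := μ)
      intro h0
      rw [h0] at hAt
      exact ht.ne' (le_antisymm hAt (by positivity))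
    calc profile μ h' t ≤ μ (hBdry A h') :=
          iInf_le_of_le A (iInf_le_of_le hAm (iInf_le_of_le hAfin (iInf_le _ hAt)))
      _ ≤ (D : ℝ≥0∞) * μ (hBdry A h) := hkey A hA
      _ = μ (hBdry A h) * (D : ℝ≥0∞) := mul_comm _ _
  calc profile μ h' t = profile μ h' t / (D : ℝ≥0∞) * (D : ℝ≥0∞) :=
        (ENNReal.div_mul_cancel hD0 hDt).symm
    _ ≤ profile μ h t * (D : ℝ≥0∞) := mul_le_mul_left hdiv _
    _ = (D : ℝ≥0∞) * profile μ h t := mul_comm _ _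

theorem profile_indep_of_h
    [MetricSpace X] [MeasurableSpace X] [BorelSpace X] (μ : Measure X) [SigmaFinite μ]
    (b : ℝ) (hb : 0 < b) (hDV : DVloc μ) (hconn : UnifConn X b)
    (h h' : ℝ) (hh : 2 * b ≤ h) (hh' : 2 * b ≤ h') :
    ∃ C₁ C₂ C₃ C₄ : ℝ≥0, 0 < C₁ ∧ 0 < C₂ ∧ 0 < C₃ ∧ 0 < C₄ ∧
      ∀ t : ℝ≥0∞, 0 < t →
        (C₁ : ℝ≥0∞) * profile μ h' ((C₂ : ℝ≥0∞) * t) ≤ profile μ h t ∧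
        profile μ h t ≤ (C₃ : ℝ≥0∞) * profile μ h' ((C₄ : ℝ≥0∞) * t) := by
  obtain ⟨D₁, hD₁, hkey₁⟩ := key_bdry_le μ hb hDV hconn hh hh'
  obtain ⟨D₂, hD₂, hkey₂⟩ := key_bdry_le μ hb hDV hconn hh' hh
  refine ⟨D₁⁻¹, 1, D₂, 1, inv_pos.mpr hD₁, one_pos, hD₂, one_pos, fun t ht => ⟨?_, ?_⟩⟩
  · have hle := profile_le_of_bdry_le μ hD₁ hkey₁ ht
    have hD0 : (D₁ : ℝ≥0∞) ≠ 0 := by exact_mod_cast hD₁.ne'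
    rw [ENNReal.coe_one, one_mul]
    calc ((D₁⁻¹ : ℝ≥0) : ℝ≥0∞) * profile μ h' t
        = (D₁ : ℝ≥0∞)⁻¹ * profile μ h' t := by
          rw [ENNReal.coe_inv hD₁.ne']
      _ ≤ (D₁ : ℝ≥0∞)⁻¹ * ((D₁ : ℝ≥0∞) * profile μ h t) := mul_le_mul_right hle _
      _ = ((D₁ : ℝ≥0∞)⁻¹ * (D₁ : ℝ≥0∞)) * profile μ h t := (mul_assoc _ _ _).symm
      _ = profile μ h t := by
          rw [ENNReal.inv_mul_cancel hD0 ENNReal.coe_ne_top, one_mul]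
  · have hle := profile_le_of_bdry_le μ hD₂ hkey₂ ht
    rw [ENNReal.coe_one, one_mul]
    exact hle
end
end

section
/- There exists a connected simple graph X of bounded degree, regarded as a metric measure space with the graph distance and the counting measure, which has linear growth — there is a constant C ≥ 1 with C⁻¹ r ≤ |B(x,r)| ≤ C r for every vertex x and every r ≥ 1 — and whose spheres have unbounded volume: sup over vertices x and radii r of |B(x,r+1) \ B(x,r)| is infinite. In particular, the isoperimetric profile of X is bounded, yet the volume of the boundaries of balls is not bounded, so X does not satisfy strongly-(IB). -/
open SimpleGraph Set

noncomputable section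

/-- The ball of center `x` and radius `r` for the graph distance. -/
def gBall {V : Type*} (G : SimpleGraph V) (x : V) (r : ℕ) : Set V := {y | G.dist x y ≤ r}

/-- The boundary `∂A = {y : d(y,A) ≤ 1 and d(y,Aᶜ) ≤ 1}` of a set of vertices. -/
def gBdry {V : Type*} (G : SimpleGraph V) (A : Set V) : Set V :=
  {y | (∃ a ∈ A, G.dist y a ≤ 1) ∧ ∃ a ∈ Aᶜ, G.dist y a ≤ 1}

/-- `G` has bounded degree. -/
def BddDegree {V : Type*} (G : SimpleGraph V) : Prop :=
  ∃ D : ℕ, ∀ v : V, (G.neighborSet v).ncard ≤ D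

namespace Comb

/-- Membership in the comb: the horizontal axis, plus for each block `m`
teeth at columns `4^m + 2^m - 2^j` (for `j ≤ m`) of height `2^j`. -/
def SP : ℕ × ℕ → Prop := fun p =>
  p.2 = 0 ∨ ∃ m j : ℕ, j ≤ m ∧ p.1 + 2 ^ j = 4 ^ m + 2 ^ m ∧ 1 ≤ p.2 ∧ p.2 ≤ 2 ^ j

abbrev VV := {p : ℕ × ℕ // SP p}

def l1 (p q : ℕ × ℕ) : ℕ := Nat.dist p.1 q.1 + Nat.dist p.2 q.2

lemma l1_comm (p q : ℕ × ℕ) : l1 p q = l1 q p := by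
  simp [l1, Nat.dist_comm]

lemma l1_self (p : ℕ × ℕ) : l1 p p = 0 := by simp [l1, Nat.dist_self]

lemma l1_triangle (p q r : ℕ × ℕ) : l1 p r ≤ l1 p q + l1 q r := by
  have h1 := Nat.dist.triangle_inequality p.1 q.1 r.1
  have h2 := Nat.dist.triangle_inequality p.2 q.2 r.2
  simp only [l1]; omega

def GG : SimpleGraph VV where
  Adj u v := l1 u.1 v.1 = 1
  symm := by constructor; intro u v h; rwa [l1_comm]
  loopless := by constructor; intro u h; rw [l1_self] at h; omega

lemma SP_axis (n : ℕ) : SP (n, 0) := Or.inl rfl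

lemma SP_below {n y : ℕ} (h : SP (n, y)) {z : ℕ} (hz : z ≤ y) : SP (n, z) := by
  rcases Nat.eq_zero_or_pos z with hz0 | hz1
  · subst hz0; exact SP_axis n
  · rcases h with h0 | ⟨m, j, hjm, hc, h1, h2⟩
    · simp only at h0; omega
    · exact Or.inr ⟨m, j, hjm, hc, hz1, le_trans hz h2⟩

lemma walk_vert (n : ℕ) : ∀ (y z : ℕ), z ≤ y → ∀ (h1 : SP (n, y)) (h2 : SP (n, z)),
    ∃ w : GG.Walk ⟨(n, y), h1⟩ ⟨(n, z), h2⟩, w.length = y - z := by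
  intro y
  induction y with
  | zero =>
    intro z hz h1 h2
    have hz0 : z = 0 := Nat.le_zero.mp hz
    subst hz0
    exact ⟨Walk.nil, rfl⟩
  | succ y ih =>
    intro z hz h1 h2
    rcases Nat.eq_or_lt_of_le hz with he | hlt
    · subst he; exact ⟨Walk.nil, by simp⟩
    · have hzy : z ≤ y := by omega
      have hmid : SP (n, y) := SP_below h1 (Nat.le_succ y)
      have hadj : GG.Adj ⟨(n, y + 1), h1⟩ ⟨(n, y), hmid⟩ := by
        show l1 (n, y+1) (n, y) = 1
        simp [l1, Nat.dist]
      obtain ⟨w, hw⟩ := ih z hzy hmid h2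
      exact ⟨Walk.cons hadj w, by simp [hw]; omega⟩

lemma walk_axis : ∀ (d n : ℕ) (h1 : SP (n, 0)) (h2 : SP (n + d, 0)),
    ∃ w : GG.Walk ⟨(n, 0), h1⟩ ⟨(n + d, 0), h2⟩, w.length = d := by
  intro d
  induction d with
  | zero => intro n h1 h2; exact ⟨Walk.nil, rfl⟩
  | succ d ih =>
    intro n h1 h2
    have hadj : GG.Adj ⟨(n, 0), h1⟩ ⟨(n + 1, 0), SP_axis _⟩ := by
      show l1 (n, 0) (n + 1, 0) = 1
      simp [l1, Nat.dist]
    have h2' : SP (n + 1 + d, 0) := SP_axis _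
    obtain ⟨w, hw⟩ := ih (n + 1) (SP_axis _) h2'
    have hEq : (⟨(n + 1 + d, 0), h2'⟩ : VV) = ⟨(n + (d + 1), 0), h2⟩ :=
      Subtype.ext (by simp [Prod.ext_iff]; omega)
    refine ⟨(Walk.cons hadj w).copy rfl hEq, by simp [hw]⟩

lemma walk_horiz (n n' : ℕ) (h1 : SP (n, 0)) (h2 : SP (n', 0)) :
    ∃ w : GG.Walk ⟨(n, 0), h1⟩ ⟨(n', 0), h2⟩, w.length = Nat.dist n n' := by
  rcases le_total n n' with h | h
  · obtain ⟨w, hw⟩ := walk_axis (n' - n) n h1 (SP_axis _)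
    have hEq : (⟨(n + (n' - n), 0), SP_axis _⟩ : VV) = ⟨(n', 0), h2⟩ :=
      Subtype.ext (by simp [Prod.ext_iff]; omega)
    refine ⟨w.copy rfl hEq, ?_⟩
    simp [hw, Nat.dist]; omega
  · obtain ⟨w, hw⟩ := walk_axis (n - n') n' h2 (SP_axis _)
    have hEq : (⟨(n' + (n - n'), 0), SP_axis _⟩ : VV) = ⟨(n, 0), h1⟩ :=
      Subtype.ext (by simp [Prod.ext_iff]; omega)
    refine ⟨(w.copy rfl hEq).reverse, ?_⟩
    simp [hw, Nat.dist]; omega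

lemma walk_general (u v : VV) :
    ∃ w : GG.Walk u v, w.length = u.1.2 + Nat.dist u.1.1 v.1.1 + v.1.2 := by
  obtain ⟨⟨n, y⟩, hu⟩ := u
  obtain ⟨⟨n', y'⟩, hv⟩ := v
  obtain ⟨w1, hw1⟩ := walk_vert n y 0 (Nat.zero_le y) hu (SP_axis n)
  obtain ⟨w2, hw2⟩ := walk_horiz n n' (SP_axis n) (SP_axis n')
  obtain ⟨w3, hw3⟩ := walk_vert n' y' 0 (Nat.zero_le y') hv (SP_axis n')
  refine ⟨w1.append (w2.append w3.reverse), ?_⟩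
  simp [Walk.length_append, Walk.length_reverse, hw1, hw2, hw3]
  omega

lemma dist_le_path (u v : VV) :
    GG.dist u v ≤ u.1.2 + Nat.dist u.1.1 v.1.1 + v.1.2 := by
  obtain ⟨w, hw⟩ := walk_general u v
  exact hw ▸ SimpleGraph.dist_le w

lemma GG_connected : GG.Connected := by
  rw [SimpleGraph.connected_iff]
  refine ⟨fun u v => ?_, ⟨⟨(0, 0), SP_axis 0⟩⟩⟩
  obtain ⟨w, _⟩ := walk_general u v
  exact ⟨w⟩

lemma l1_le_length {u v : VV} (w : GG.Walk u v) : l1 u.1 v.1 ≤ w.length := by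
  induction w with
  | nil => simp [l1_self]
  | @cons a b c h p ih =>
    have ht := l1_triangle a.1 b.1 c.1
    have hab : l1 a.1 b.1 = 1 := h
    simp only [Walk.length_cons]
    omega

lemma l1_le_dist (u v : VV) : l1 u.1 v.1 ≤ GG.dist u v := by
  obtain ⟨w, hw⟩ := GG_connected.exists_walk_length_eq_dist u v
  exact hw ▸ l1_le_length w

lemma nat_dist_iff {a b r : ℕ} (h : Nat.dist a b ≤ r) : a ≤ b + r ∧ b ≤ a + r := by
  simp [Nat.dist] at h; omega

end Comb

namespace Comb

lemma pow2_le_pow4 (m : ℕ) : 2 ^ m ≤ 4 ^ m :=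
  Nat.pow_le_pow_left (by norm_num) m

lemma tooth_log {c m j : ℕ} (hjm : j ≤ m) (hc : c + 2 ^ j = 4 ^ m + 2 ^ m) :
    Nat.log 4 c = m := by
  have hj : 2 ^ j ≤ 2 ^ m := Nat.pow_le_pow_right (by norm_num) hjm
  have hjpos : 1 ≤ 2 ^ j := Nat.one_le_two_pow
  have h1 : 4 ^ m ≤ c := by omega
  have h24 := pow2_le_pow4 m
  have h2 : c < 4 ^ (m + 1) := by
    have : (4 : ℕ) ^ (m + 1) = 4 * 4 ^ m := by ring
    omega
  exact Nat.log_eq_of_pow_le_of_lt_pow h1 h2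

lemma block_unique {m m' col : ℕ} (h1 : 4 ^ m ≤ col) (h2 : col < 4 ^ m + 2 ^ m)
    (h1' : 4 ^ m' ≤ col) (h2' : col < 4 ^ m' + 2 ^ m') : m = m' := by
  have key : ∀ a b : ℕ, a < b → 4 ^ a + 2 ^ a ≤ 4 ^ b := by
    intro a b hab
    have h24 := pow2_le_pow4 a
    have h4 : (4 : ℕ) ^ (a + 1) ≤ 4 ^ b := Nat.pow_le_pow_right (by norm_num) hab
    have : (4 : ℕ) ^ (a + 1) = 4 * 4 ^ a := by ring
    omega
  rcases lt_trichotomy m m' with h | h | h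
  · have := key m m' h; omega
  · exact h
  · have := key m' m h; omega

lemma j_unique {j j' v : ℕ} (h1 : 2 ^ j / 2 < v) (h2 : v ≤ 2 ^ j)
    (h1' : 2 ^ j' / 2 < v) (h2' : v ≤ 2 ^ j') : j = j' := by
  have key : ∀ a b : ℕ, a < b → 2 ^ a ≤ 2 ^ b / 2 := by
    intro a b hab
    rcases Nat.exists_eq_add_of_lt hab with ⟨k, rfl⟩
    have h2 : (2:ℕ) ^ (a + k + 1) = 2 * 2 ^ (a + k) := by ring
    rw [h2, Nat.mul_div_cancel_left _ (by norm_num)]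
    exact Nat.pow_le_pow_right (by norm_num) (by omega)
  rcases lt_trichotomy j j' with h | h | h
  · have := key j j' h; omega
  · exact h
  · have := key j' j h; omega

/-- Key decoding facts for a tooth point inside an `l1`-ball of radius `r`
around `(a,b)`. -/
lemma decode {b r c y m j : ℕ} (hr : 1 ≤ r) (hjm : j ≤ m)
    (hc : c + 2 ^ j = 4 ^ m + 2 ^ m) (hy1 : 1 ≤ y) (hy2 : y ≤ 2 ^ j)
    (hyb : Nat.dist y b ≤ r) :
    ∀ w q y0 : ℕ, w = max 1 ((4 ^ m + 2 ^ m - c) / 2) → q = min w (r + 1) →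
      y0 = max 1 (b - r) →
    (y - y0) / q ≤ 1 ∧
    4 ^ m ≤ c + (y - y0) % q ∧ c + (y - y0) % q < 4 ^ m + 2 ^ m ∧
    2 ^ j / 2 < 4 ^ m + 2 ^ m - (c + (y - y0) % q) ∧
    4 ^ m + 2 ^ m - (c + (y - y0) % q) ≤ 2 ^ j ∧
    y0 ≤ y ∧ q * ((y - y0) / q) + (y - y0) % q = y - y0 := by
  intro w q y0 hw hq hy0
  have hdist := nat_dist_iff hyb
  have hj : 2 ^ j ≤ 2 ^ m := Nat.pow_le_pow_right (by norm_num) hjm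
  have h4m : 4 ^ m ≤ c := by have := Nat.one_le_two_pow (n := j); omega
  have hBc : 4 ^ m + 2 ^ m - c = 2 ^ j := by omega
  have hy0y : y0 ≤ y := by omega
  have hqpos : 1 ≤ q := by
    rw [hq, hw]; omega
  have humod : (y - y0) % q < q := Nat.mod_lt _ (by omega)
  have hdm := Nat.div_add_mod (y - y0) q
  -- main case split on j
  rcases Nat.eq_zero_or_pos j with hj0 | hjpos
  · subst hj0
    simp only [pow_zero] at hy2 hBc ⊢
    have hy : y = 1 := by omega
    have hwv : w = 1 := by rw [hw, hBc]; omega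
    have hqv : q = 1 := by rw [hq, hwv]; omega
    have hyy0 : y - y0 = 0 := by omega
    rw [hyy0, hqv]
    omega
  · -- j ≥ 1 : 2^j = 2 * 2^(j-1), 2^j/2 = 2^(j-1)
    obtain ⟨i, rfl⟩ : ∃ i, j = i + 1 := ⟨j - 1, by omega⟩
    have h2j : (2:ℕ) ^ (i + 1) = 2 * 2 ^ i := by ring
    have h2jd : (2:ℕ) ^ (i + 1) / 2 = 2 ^ i := by
      rw [h2j, Nat.mul_div_cancel_left _ (by norm_num)]
    have hipos : 1 ≤ (2:ℕ) ^ i := Nat.one_le_two_pow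
    have hwv : w = 2 ^ i := by rw [hw, hBc, h2jd]; omega
    have hqw : q ≤ 2 ^ i := by rw [hq, hwv]; omega
    have hql : q ≤ r + 1 := by rw [hq]; omega
    -- y - y0 < 2 * q
    have hlt2q : y - y0 < 2 * q := by
      rcases Nat.lt_or_ge (2 ^ i) (r + 2) with hcase | hcase
      · -- q = w = 2^i, y ≤ 2^(i+1) = 2*2^i, y0 ≥ 1
        have hqv : q = 2 ^ i := by rw [hq, hwv]; omega
        rw [hqv]; omega
      · -- q = r+1, y - y0 ≤ 2r
        have hqv : q = r + 1 := by rw [hq, hwv]; omega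
        rw [hqv]; omega
    have hdiv1 : (y - y0) / q ≤ 1 := by
      have h2 : (y - y0) / q < 2 := (Nat.div_lt_iff_lt_mul (by omega)).mpr (by omega)
      omega
    have hmw : (y - y0) % q < 2 ^ i := by omega
    refine ⟨hdiv1, by omega, by omega, ?_, by omega, hy0y, Nat.div_add_mod _ _⟩
    rw [h2jd]; omega

end Comb
namespace Comb

/-- Injectivity core for the counting map on teeth. -/
lemma inj_core {b r : ℕ} (hr : 1 ≤ r)
    {c y m j c' y' m' j' : ℕ}
    (hjm : j ≤ m) (hc : c + 2 ^ j = 4 ^ m + 2 ^ m) (hy1 : 1 ≤ y) (hy2 : y ≤ 2 ^ j)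
    (hyb : Nat.dist y b ≤ r)
    (hjm' : j' ≤ m') (hc' : c' + 2 ^ j' = 4 ^ m' + 2 ^ m') (hy1' : 1 ≤ y') (hy2' : y' ≤ 2 ^ j')
    (hyb' : Nat.dist y' b ≤ r)
    (hδ : (y - max 1 (b - r)) / min (max 1 ((4 ^ m + 2 ^ m - c) / 2)) (r + 1)
        = (y' - max 1 (b - r)) / min (max 1 ((4 ^ m' + 2 ^ m' - c') / 2)) (r + 1))
    (hcol : c + (y - max 1 (b - r)) % min (max 1 ((4 ^ m + 2 ^ m - c) / 2)) (r + 1)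
        = c' + (y' - max 1 (b - r)) % min (max 1 ((4 ^ m' + 2 ^ m' - c') / 2)) (r + 1)) :
    c = c' ∧ y = y' := by
  obtain ⟨e1, e2, e3, e4, e5, e6, e7⟩ := decode hr hjm hc hy1 hy2 hyb _ _ _ rfl rfl rfl
  obtain ⟨f1, f2, f3, f4, f5, f6, f7⟩ := decode hr hjm' hc' hy1' hy2' hyb' _ _ _ rfl rfl rfl
  have f2' : 4 ^ m' ≤ c + (y - max 1 (b - r)) % min (max 1 ((4 ^ m + 2 ^ m - c) / 2)) (r + 1) := by
    omega
  have f3' : c + (y - max 1 (b - r)) % min (max 1 ((4 ^ m + 2 ^ m - c) / 2)) (r + 1)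
      < 4 ^ m' + 2 ^ m' := by omega
  have hm : m = m' := block_unique e2 e3 f2' f3'
  subst hm
  have f4' : 2 ^ j' / 2 < 4 ^ m + 2 ^ m
      - (c + (y - max 1 (b - r)) % min (max 1 ((4 ^ m + 2 ^ m - c) / 2)) (r + 1)) := by omega
  have f5' : 4 ^ m + 2 ^ m
      - (c + (y - max 1 (b - r)) % min (max 1 ((4 ^ m + 2 ^ m - c) / 2)) (r + 1)) ≤ 2 ^ j' := by omega
  have hj : j = j' := j_unique e4 e5 f4' f5'
  subst hj
  have hcc : c = c' := by omega
  subst hcc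
  have huu : (y - max 1 (b - r)) % min (max 1 ((4 ^ m + 2 ^ m - c) / 2)) (r + 1)
      = (y' - max 1 (b - r)) % min (max 1 ((4 ^ m + 2 ^ m - c) / 2)) (r + 1) := by omega
  rw [← hδ, ← huu] at f7
  exact ⟨rfl, by omega⟩

lemma ball_bound (x : VV) (r : ℕ) (hr : 1 ≤ r) :
    (gBall GG x r).Finite ∧ (gBall GG x r).ncard ≤ 9 * r + 9 := by
  classical
  obtain ⟨⟨a, b⟩, hx⟩ := x
  set L : Set VV := {v : VV | l1 (a, b) v.1 ≤ r} with hL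
  have hsub : gBall GG ⟨(a, b), hx⟩ r ⊆ L := by
    intro v hv
    exact le_trans (l1_le_dist _ v) hv
  set f : VV → ℕ × ℕ := fun v =>
    if v.1.2 = 0 then (2, v.1.1)
    else
      ((v.1.2 - max 1 (b - r)) /
          min (max 1 ((4 ^ Nat.log 4 v.1.1 + 2 ^ Nat.log 4 v.1.1 - v.1.1) / 2)) (r + 1),
        v.1.1 + (v.1.2 - max 1 (b - r)) %
          min (max 1 ((4 ^ Nat.log 4 v.1.1 + 2 ^ Nat.log 4 v.1.1 - v.1.1) / 2)) (r + 1))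
    with hf
  -- how f computes on teeth
  have key : ∀ v : VV, v.1.2 ≠ 0 →
      ∃ m j : ℕ, j ≤ m ∧ v.1.1 + 2 ^ j = 4 ^ m + 2 ^ m ∧ 1 ≤ v.1.2 ∧ v.1.2 ≤ 2 ^ j ∧
        f v = ((v.1.2 - max 1 (b - r)) / min (max 1 ((4 ^ m + 2 ^ m - v.1.1) / 2)) (r + 1),
          v.1.1 + (v.1.2 - max 1 (b - r)) %
            min (max 1 ((4 ^ m + 2 ^ m - v.1.1) / 2)) (r + 1)) := by
    rintro ⟨⟨c, y⟩, hv⟩ hy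
    have hv' := hv
    rcases hv' with h0 | ⟨m, j, hjm, hc, hy1, hy2⟩
    · exact absurd h0 hy
    · have hlog : Nat.log 4 c = m := tooth_log hjm hc
      refine ⟨m, j, hjm, hc, hy1, hy2, ?_⟩
      simp only [hf]
      rw [if_neg hy]
      rw [hlog]
  -- membership inequalities from L
  have hLmem : ∀ v : VV, v ∈ L → Nat.dist a v.1.1 ≤ r ∧ Nat.dist b v.1.2 ≤ r := by
    intro v hv
    have : Nat.dist a v.1.1 + Nat.dist b v.1.2 ≤ r := hv
    omega
  have hqpos : ∀ c : ℕ, 0 < min (max 1 ((4 ^ Nat.log 4 c + 2 ^ Nat.log 4 c - c) / 2)) (r + 1) := by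
    intro c; omega
  -- injectivity
  have hinj : Set.InjOn f L := by
    rintro u huL v hvL hfe
    by_cases hu0 : u.1.2 = 0 <;> by_cases hv0 : v.1.2 = 0
    · have h1 : f u = (2, u.1.1) := by simp only [hf]; rw [if_pos hu0]
      have h2 : f v = (2, v.1.1) := by simp only [hf]; rw [if_pos hv0]
      rw [h1, h2, Prod.mk.injEq] at hfe
      exact Subtype.ext (Prod.ext hfe.2 (hu0.trans hv0.symm))
    · exfalso
      obtain ⟨m, j, hjm, hc, hy1, hy2, hfv⟩ := key v hv0
      obtain ⟨d1, _⟩ := decode hr hjm hc hy1 hy2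
        (by rw [Nat.dist_comm]; exact (hLmem v hvL).2) _ _ _ rfl rfl rfl
      have h1 : f u = (2, u.1.1) := by simp only [hf]; rw [if_pos hu0]
      rw [h1, hfv, Prod.mk.injEq] at hfe
      omega
    · exfalso
      obtain ⟨m, j, hjm, hc, hy1, hy2, hfu⟩ := key u hu0
      obtain ⟨d1, _⟩ := decode hr hjm hc hy1 hy2
        (by rw [Nat.dist_comm]; exact (hLmem u huL).2) _ _ _ rfl rfl rfl
      have h2 : f v = (2, v.1.1) := by simp only [hf]; rw [if_pos hv0]
      rw [h2, hfu, Prod.mk.injEq] at hfe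
      omega
    · obtain ⟨m, j, hjm, hc, hy1, hy2, hfu⟩ := key u hu0
      obtain ⟨m', j', hjm', hc', hy1', hy2', hfv⟩ := key v hv0
      rw [hfu, hfv, Prod.mk.injEq] at hfe
      have hmain := inj_core hr hjm hc hy1 hy2
        (by rw [Nat.dist_comm]; exact (hLmem u huL).2)
        hjm' hc' hy1' hy2'
        (by rw [Nat.dist_comm]; exact (hLmem v hvL).2)
        hfe.1 hfe.2
      exact Subtype.ext (Prod.ext hmain.1 hmain.2)
  -- image bound
  set T : Finset (ℕ × ℕ) := Finset.Iic 2 ×ˢ Finset.Icc (a - r) (a + 2 * r + 2) with hT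
  have himg : ∀ v ∈ L, f v ∈ (T : Set (ℕ × ℕ)) := by
    intro v hvL
    obtain ⟨ha1, hb1⟩ := hLmem v hvL
    have haux := nat_dist_iff ha1
    by_cases hv0 : v.1.2 = 0
    · have h1 : f v = (2, v.1.1) := by simp only [hf]; rw [if_pos hv0]
      rw [h1]
      simp only [hT, Finset.coe_product, Set.mem_prod, Finset.coe_Iic, Set.mem_Iic,
        Finset.coe_Icc, Set.mem_Icc]
      omega
    · obtain ⟨m, j, hjm, hc, hy1, hy2, hfv⟩ := key v hv0
      obtain ⟨d1, _⟩ := decode hr hjm hc hy1 hy2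
        (by rw [Nat.dist_comm]; exact hb1) _ _ _ rfl rfl rfl
      have hlog : Nat.log 4 v.1.1 = m := tooth_log hjm hc
      have humod : (v.1.2 - max 1 (b - r)) %
          min (max 1 ((4 ^ m + 2 ^ m - v.1.1) / 2)) (r + 1)
          < min (max 1 ((4 ^ m + 2 ^ m - v.1.1) / 2)) (r + 1) :=
        Nat.mod_lt _ (by omega)
      rw [hfv]
      simp only [hT, Finset.coe_product, Set.mem_prod, Finset.coe_Iic, Set.mem_Iic,
        Finset.coe_Icc, Set.mem_Icc]
      omega
  -- conclude
  have himgsub : f '' L ⊆ (T : Set (ℕ × ℕ)) := by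
    rintro _ ⟨v, hv, rfl⟩; exact himg v hv
  have hLfin : L.Finite :=
    Set.Finite.of_finite_image (Set.Finite.subset (T.finite_toSet) himgsub) hinj
  have hTcard : T.card ≤ 9 * r + 9 := by
    rw [hT, Finset.card_product, Nat.card_Iic, Nat.card_Icc]
    have : a + 2 * r + 2 + 1 - (a - r) ≤ 3 * r + 3 := by omega
    nlinarith
  have hLcard : L.ncard ≤ 9 * r + 9 := by
    have h1 : (f '' L).ncard = L.ncard := Set.ncard_image_of_injOn hinj
    have h2 : (f '' L).ncard ≤ (T : Set (ℕ × ℕ)).ncard :=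
      Set.ncard_le_ncard himgsub (T.finite_toSet)
    rw [Set.ncard_coe_finset] at h2
    omega
  exact ⟨hLfin.subset hsub,
    le_trans (Set.ncard_le_ncard hsub hLfin) hLcard⟩

end Comb
namespace Comb

lemma ball_lower (x : VV) (r : ℕ) (hfin : (gBall GG x r).Finite) :
    r + 1 ≤ (gBall GG x r).ncard := by
  classical
  obtain ⟨⟨n, y⟩, hx⟩ := x
  set g : ℕ → VV := fun t =>
    if h : t ≤ y then ⟨(n, y - t), SP_below hx (by omega)⟩
    else ⟨(n + (t - y), 0), SP_axis _⟩ with hg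
  have hgball : ∀ t, t ≤ r → g t ∈ gBall GG ⟨(n, y), hx⟩ r := by
    intro t ht
    by_cases h : t ≤ y
    · have hgt : g t = ⟨(n, y - t), SP_below hx (by omega)⟩ := by
        simp only [hg]; rw [dif_pos h]
      obtain ⟨w, hw⟩ := walk_vert n y (y - t) (by omega) hx (SP_below hx (by omega))
      have : GG.dist ⟨(n, y), hx⟩ (g t) ≤ t := by
        rw [hgt]
        refine le_trans (SimpleGraph.dist_le w) ?_
        omega
      exact le_trans this ht
    · have hgt : g t = ⟨(n + (t - y), 0), SP_axis _⟩ := by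
        simp only [hg]; rw [dif_neg h]
      have hd := dist_le_path ⟨(n, y), hx⟩ ⟨(n + (t - y), 0), SP_axis _⟩
      simp only at hd
      have hnd : Nat.dist n (n + (t - y)) = t - y := by simp [Nat.dist]
      rw [hnd] at hd
      have : GG.dist ⟨(n, y), hx⟩ (g t) ≤ t := by rw [hgt]; omega
      exact le_trans this ht
  have hval : ∀ t, (g t).1 = if t ≤ y then (n, y - t) else (n + (t - y), 0) := by
    intro t
    by_cases h : t ≤ y
    · simp only [hg]; rw [dif_pos h, if_pos h]
    · simp only [hg]; rw [dif_neg h, if_neg h]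
  have hginj : Set.InjOn g (Finset.range (r + 1)) := by
    intro s _ t _ hst
    have hv := congrArg Subtype.val hst
    rw [hval s, hval t] at hv
    split_ifs at hv with h1 h2 h2 <;> rw [Prod.mk.injEq] at hv <;> omega
  have hsub2 : g '' (Finset.range (r + 1)) ⊆ gBall GG ⟨(n, y), hx⟩ r := by
    rintro _ ⟨t, ht, rfl⟩
    simp only [Finset.coe_range, Set.mem_Iio] at ht
    exact hgball t (by omega)
  have h1 : (g '' (Finset.range (r + 1))).ncard = r + 1 := by
    rw [Set.ncard_image_of_injOn hginj, Set.ncard_coe_finset, Finset.card_range]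
  calc r + 1 = (g '' (Finset.range (r + 1))).ncard := h1.symm
    _ ≤ (gBall GG ⟨(n, y), hx⟩ r).ncard := Set.ncard_le_ncard hsub2 hfin

lemma origin_mem : SP (0, 0) := SP_axis 0

def o : VV := ⟨(0, 0), origin_mem⟩

lemma sphere_big (M : ℕ) :
    ∃ r : ℕ, M ≤ (gBall GG o (r + 1) \ gBall GG o r).ncard := by
  classical
  obtain ⟨B, hB⟩ : ∃ B : ℕ, B = 4 ^ M + 2 ^ M := ⟨_, rfl⟩
  have h4M : 1 ≤ (4:ℕ) ^ M := Nat.one_le_pow _ _ (by norm_num)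
  have h2M : 1 ≤ (2:ℕ) ^ M := Nat.one_le_two_pow
  have hBpos : 1 ≤ B := by omega
  refine ⟨B - 1, ?_⟩
  have hrB : B - 1 + 1 = B := by omega
  set tip : ℕ → VV := fun j =>
    if h : j ≤ M then ⟨(B - 2 ^ j, 2 ^ j), Or.inr ⟨M, j, h, by
      have h2 : 2 ^ j ≤ 2 ^ M := Nat.pow_le_pow_right (by norm_num) h
      omega, Nat.one_le_two_pow, le_rfl⟩⟩
    else o with htip
  have htipv : ∀ j, j ≤ M → (tip j).1 = (B - 2 ^ j, 2 ^ j) := by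
    intro j h; simp only [htip]; rw [dif_pos h]
  have htipmem : ∀ j, j ≤ M → tip j ∈ gBall GG o (B - 1 + 1) \ gBall GG o (B - 1) := by
    intro j h
    have hj2 : 2 ^ j ≤ 2 ^ M := Nat.pow_le_pow_right (by norm_num) h
    have hl1 : l1 o.1 (tip j).1 = B := by
      rw [htipv j h]
      show Nat.dist 0 (B - 2 ^ j) + Nat.dist 0 (2 ^ j) = B
      have h1 : 1 ≤ (2:ℕ) ^ j := Nat.one_le_two_pow
      simp [Nat.dist]
      omega
    constructor
    · show GG.dist o (tip j) ≤ B - 1 + 1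
      have hd := dist_le_path o (tip j)
      have : o.1.2 = 0 := rfl
      have h0 : Nat.dist o.1.1 (tip j).1.1 = B - 2 ^ j := by
        rw [htipv j h]; show Nat.dist 0 (B - 2 ^ j) = B - 2 ^ j; simp [Nat.dist]
      rw [h0] at hd
      have h2 : (tip j).1.2 = 2 ^ j := by rw [htipv j h]
      rw [h2] at hd
      have h1 : 1 ≤ (2:ℕ) ^ j := Nat.one_le_two_pow
      omega
    · show ¬ GG.dist o (tip j) ≤ B - 1
      have := l1_le_dist o (tip j)
      rw [hl1] at this
      omega
  have htipinj : Set.InjOn tip (Finset.range (M + 1)) := by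
    intro s hs t ht hst
    simp only [Finset.coe_range, Set.mem_Iio] at hs ht
    have h1 := htipv s (by omega)
    have h2 := htipv t (by omega)
    rw [hst] at h1
    rw [h1] at h2
    rw [Prod.mk.injEq] at h2
    exact Nat.pow_right_injective (by norm_num) h2.2
  have hfin : (gBall GG o (B - 1 + 1) \ gBall GG o (B - 1)).Finite := by
    have := (ball_bound o (B - 1 + 1) (by omega)).1
    exact this.subset Set.diff_subset
  have hsub : tip '' (Finset.range (M + 1)) ⊆ gBall GG o (B - 1 + 1) \ gBall GG o (B - 1) := by
    rintro _ ⟨j, hj, rfl⟩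
    simp only [Finset.coe_range, Set.mem_Iio] at hj
    exact htipmem j (by omega)
  have h1 : (tip '' (Finset.range (M + 1))).ncard = M + 1 := by
    rw [Set.ncard_image_of_injOn htipinj, Set.ncard_coe_finset, Finset.card_range]
  have := Set.ncard_le_ncard hsub hfin
  omega

lemma degree_le (v : VV) : (GG.neighborSet v).ncard ≤ 4 := by
  classical
  obtain ⟨⟨n, y⟩, hv⟩ := v
  set S4 : Set (ℕ × ℕ) := {(n + 1, y), (n - 1, y), (n, y + 1), (n, y - 1)} with hS4
  have hsub : Subtype.val '' (GG.neighborSet ⟨(n, y), hv⟩) ⊆ S4 := by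
    rintro _ ⟨u, hu, rfl⟩
    have hadj : l1 (n, y) u.1 = 1 := hu
    obtain ⟨⟨n', y'⟩, hu'⟩ := u
    simp only [l1, Nat.dist] at hadj
    simp only [hS4, Set.mem_insert_iff, Set.mem_singleton_iff, Prod.mk.injEq]
    omega
  have h1 : (GG.neighborSet ⟨(n, y), hv⟩).ncard
      = (Subtype.val '' (GG.neighborSet ⟨(n, y), hv⟩)).ncard :=
    (Set.ncard_image_of_injective _ Subtype.val_injective).symm
  have h2 : S4.ncard ≤ 4 := by
    rw [hS4]
    refine le_trans (Set.ncard_insert_le _ _) ?_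
    have := Set.ncard_insert_le (n - 1, y) ({(n, y + 1), (n, y - 1)} : Set (ℕ × ℕ))
    have := Set.ncard_insert_le (n, y + 1) ({(n, y - 1)} : Set (ℕ × ℕ))
    simp only [Set.ncard_singleton] at *
    omega
  have hfin : S4.Finite := Set.toFinite _
  rw [h1]
  exact le_trans (Set.ncard_le_ncard hsub hfin) h2

end Comb
theorem exists_linear_growth_graph_with_unbounded_spheres :
    ∃ (V : Type) (G : SimpleGraph V), Countable V ∧ Infinite V ∧
      G.Connected ∧ BddDegree G ∧
      (∃ C : ℝ, 1 ≤ C ∧ ∀ (x : V) (r : ℕ), 1 ≤ r →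
        C⁻¹ * (r : ℝ) ≤ ((gBall G x r).ncard : ℝ) ∧
        ((gBall G x r).ncard : ℝ) ≤ C * (r : ℝ)) ∧
      (∀ M : ℕ, ∃ (x : V) (r : ℕ),
        M ≤ (gBall G x (r + 1) \ gBall G x r).ncard) := by
  refine ⟨Comb.VV, Comb.GG, inferInstance, ?_, Comb.GG_connected, ⟨4, Comb.degree_le⟩, ?_, ?_⟩
  · exact Infinite.of_injective (fun n : ℕ => (⟨(n, 0), Comb.SP_axis n⟩ : Comb.VV))
      (by intro s t h; simpa [Subtype.mk.injEq, Prod.mk.injEq] using h)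
  · refine ⟨20, by norm_num, ?_⟩
    intro x r hr
    obtain ⟨hfin, hcard⟩ := Comb.ball_bound x r hr
    have hlow := Comb.ball_lower x r hfin
    constructor
    · have h1 : (20:ℝ)⁻¹ * (r : ℝ) ≤ (r : ℝ) := by
        have : (0:ℝ) ≤ (r : ℝ) := Nat.cast_nonneg r
        nlinarith
      have h2 : (r : ℝ) ≤ ((gBall Comb.GG x r).ncard : ℝ) := by
        exact_mod_cast (by omega : r ≤ (gBall Comb.GG x r).ncard)
      linarith
    · have h3 : (gBall Comb.GG x r).ncard ≤ 20 * r := by omega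
      have h4 : ((gBall Comb.GG x r).ncard : ℝ) ≤ ((20 * r : ℕ) : ℝ) := by
        exact_mod_cast h3
      simpa using h4
  · intro M
    obtain ⟨r, hrM⟩ := Comb.sphere_big M
    exact ⟨Comb.o, r, hrM⟩
end
end

section
/- For every integer d ≥ 2 there exists a connected simple graph X of bounded degree with polynomial growth of degree d (graph distance, counting measure) whose isoperimetric profile I is bounded, but whose balls are not asymptotically isoperimetric: inf{|∂B(x,r)| : x a vertex, r > 0, |B(x,r)| ≥ t} tends to infinity as t → ∞. -/
open SimpleGraph Set Filter

noncomputable section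

/-- `G` has polynomial growth of degree `d`. -/
def PolyGrowth {V : Type*} (G : SimpleGraph V) (d : ℕ) : Prop :=
  ∃ C : ℝ, 1 ≤ C ∧ ∀ (x : V) (r : ℕ), 1 ≤ r →
    C⁻¹ * (r : ℝ) ^ d ≤ ((gBall G x r).ncard : ℝ) ∧
    ((gBall G x r).ncard : ℝ) ≤ C * (r : ℝ) ^ d

/-- The isoperimetric profile `I(t) = inf {|∂A| : A finite, |A| ≥ t}`. -/
def gProfile {V : Type*} (G : SimpleGraph V) (t : ℕ) : ℕ :=
  sInf {m : ℕ | ∃ A : Set V, A.Finite ∧ t ≤ A.ncard ∧ (gBdry G A).ncard = m}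

/-- The profile restricted to balls: `inf {|∂B(x,r)| : |B(x,r)| ≥ t}`. -/
def gBallProfile {V : Type*} (G : SimpleGraph V) (t : ℕ) : ℕ :=
  sInf {m : ℕ | ∃ (x : V) (r : ℕ), 0 < r ∧ t ≤ (gBall G x r).ncard ∧
    (gBdry G (gBall G x r)).ncard = m}

namespace NIB

variable {d : ℕ}
def nn (y : Fin d → ℤ) : ℕ := Finset.univ.sup fun i => (y i).natAbs
lemma natAbs_le_nn (y : Fin d → ℤ) (i : Fin d) : (y i).natAbs ≤ nn y :=
  Finset.le_sup (f := fun i => (y i).natAbs) (Finset.mem_univ i)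
lemma nn_le {y : Fin d → ℤ} {m : ℕ} (h : ∀ i, (y i).natAbs ≤ m) : nn y ≤ m :=
  Finset.sup_le fun i _ => h i
lemma nn_zero : nn (0 : Fin d → ℤ) = 0 := by simp [nn]
lemma nn_eq_zero_iff {y : Fin d → ℤ} : nn y = 0 ↔ y = 0 := by
  constructor
  · intro h
    funext i
    have := natAbs_le_nn y i
    have : (y i).natAbs = 0 := by omega
    simpa [Int.natAbs_eq_zero] using this
  · rintro rfl; exact nn_zero
lemma nn_pos_of_ne {y : Fin d → ℤ} (h : y ≠ 0) : 1 ≤ nn y := by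
  rcases Nat.eq_zero_or_pos (nn y) with h0 | h1
  · exact absurd (nn_eq_zero_iff.mp h0) h
  · exact h1
lemma nn_neg (y : Fin d → ℤ) : nn (-y) = nn y := by simp [nn]
lemma nn_sub_comm (y z : Fin d → ℤ) : nn (y - z) = nn (z - y) := by
  rw [← nn_neg (y - z)]; congr 1; abel
lemma nn_add_le (y z : Fin d → ℤ) : nn (y + z) ≤ nn y + nn z := by
  refine nn_le fun i => ?_
  calc ((y + z) i).natAbs = (y i + z i).natAbs := rfl
    _ ≤ (y i).natAbs + (z i).natAbs := Int.natAbs_add_le _ _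
    _ ≤ nn y + nn z := Nat.add_le_add (natAbs_le_nn y i) (natAbs_le_nn z i)
lemma nn_tri (x y z : Fin d → ℤ) : nn (x - z) ≤ nn (x - y) + nn (y - z) := by
  have h : x - z = (x - y) + (y - z) := by abel
  rw [h]; exact nn_add_le _ _
lemma nn_sub_le (y z : Fin d → ℤ) : nn (y - z) ≤ nn y + nn z := by
  have := nn_tri y 0 z
  simpa [nn_neg] using this
lemma nn_le_add_sub (a c : Fin d → ℤ) : nn a ≤ nn (a - c) + nn c := by
  have := nn_tri a c 0
  simpa using this

-- new part --
variable (d) in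
/-- attach points -/
def aseq (n : ℕ) : ℤ := ((n : ℤ) + 2) ^ 2

variable (d) in
def zpt (n : ℕ) : Fin d → ℤ := fun i => if (i : ℕ) = 0 then aseq n else 0

variable (d) in
/-- the balloon of index `n` : a sup-ball of radius `n+1` minus its center -/
@[reducible] def Cube (n : ℕ) : Type := {y : Fin d → ℤ // nn y ≤ n + 1 ∧ y ≠ 0}

variable (d) in
@[reducible] def V : Type := (Fin d → ℤ) ⊕ (Σ n : ℕ, Cube d n)

/-- the graph metric -/
def rho : V d → V d → ℕ
  | .inl u, .inl w => nn (u - w)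
  | .inl u, .inr ⟨n, y⟩ => nn (u - zpt d n) + nn y.1
  | .inr ⟨n, y⟩, .inl w => nn y.1 + nn (zpt d n - w)
  | .inr ⟨n, y⟩, .inr ⟨m, y'⟩ =>
      if n = m then nn (y.1 - y'.1) else nn y.1 + nn (zpt d n - zpt d m) + nn y'.1

lemma rho_self (x : V d) : rho x x = 0 := by
  rcases x with u | ⟨n, y⟩ <;> simp [rho, nn_zero]

lemma rho_comm (x y : V d) : rho x y = rho y x := by
  rcases x with u | ⟨n, a⟩ <;> rcases y with w | ⟨m, b⟩ <;>
    simp only [rho]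
  · rw [nn_sub_comm]
  · rw [nn_sub_comm]; ring
  · rw [nn_sub_comm]; ring
  · rcases eq_or_ne n m with h | h
    · subst h; simp [nn_sub_comm]
    · rw [if_neg h, if_neg (Ne.symm h), nn_sub_comm]; ring

lemma rho_eq_zero_iff {x y : V d} : rho x y = 0 ↔ x = y := by
  constructor
  · rcases x with u | ⟨n, a⟩ <;> rcases y with w | ⟨m, b⟩ <;> simp only [rho] <;> intro h
    · have : u - w = 0 := nn_eq_zero_iff.mp h
      have : u = w := by
        funext i; have := congrFun this i; simp only [Pi.sub_apply, Pi.zero_apply] at this; omega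
      rw [this]
    · have := nn_pos_of_ne b.2.2; omega
    · have := nn_pos_of_ne a.2.2; omega
    · rcases eq_or_ne n m with hnm | hnm
      · subst hnm
        rw [if_pos rfl] at h
        have : a.1 - b.1 = 0 := nn_eq_zero_iff.mp h
        have hab : a.1 = b.1 := by
          funext i; have := congrFun this i; simp only [Pi.sub_apply, Pi.zero_apply] at this
          omega
        have : a = b := Subtype.ext hab
        rw [this]
      · rw [if_neg hnm] at h
        have := nn_pos_of_ne a.2.2; omega
  · rintro rfl; exact rho_self x


lemma rho_tri (x y z : V d) : rho x z ≤ rho x y + rho y z := by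
  obtain (u | ⟨n, a⟩) := x <;> obtain (v | ⟨p, c⟩) := y <;> obtain (w | ⟨m, b⟩) := z <;>
    simp only [rho]
  · exact nn_tri u v w
  · have := nn_tri u v (zpt d m); omega
  · have := nn_tri u (zpt d p) w; omega
  · rcases eq_or_ne p m with rfl | hpm
    · rw [if_pos rfl]
      have h1 := nn_le_add_sub b.1 c.1
      have h2 := nn_sub_comm b.1 c.1
      omega
    · rw [if_neg hpm]
      have := nn_tri u (zpt d p) (zpt d m); omega
  · have := nn_tri (zpt d n) v w; omega
  · rcases eq_or_ne n m with rfl | hnm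
    · rw [if_pos rfl]
      have := nn_sub_le a.1 b.1; omega
    · rw [if_neg hnm]
      have := nn_tri (zpt d n) v (zpt d m); omega
  · rcases eq_or_ne n p with rfl | hnp
    · rw [if_pos rfl]
      have := nn_le_add_sub a.1 c.1; omega
    · rw [if_neg hnp]
      have := nn_tri (zpt d n) (zpt d p) w; omega
  · rcases eq_or_ne n p with rfl | hnp
    · rcases eq_or_ne n m with rfl | hnm
      · rw [if_pos rfl, if_pos rfl, if_pos rfl]
        exact nn_tri a.1 c.1 b.1
      · rw [if_neg hnm, if_pos rfl, if_neg hnm]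
        have := nn_le_add_sub a.1 c.1; omega
    · rcases eq_or_ne p m with rfl | hpm
      · rw [if_neg hnp, if_neg hnp, if_pos rfl]
        have h4 := nn_le_add_sub b.1 c.1
        have h5 := nn_sub_comm b.1 c.1
        omega
      · rcases eq_or_ne n m with rfl | hnm
        · rw [if_pos rfl, if_neg hnp, if_neg hpm]
          have := nn_sub_le a.1 b.1; omega
        · rw [if_neg hnm, if_neg hnp, if_neg hpm]
          have := nn_tri (zpt d n) (zpt d p) (zpt d m); omega

def stp (a b : Fin d → ℤ) : Fin d → ℤ := fun i => a i + (b i - a i).sign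
lemma stp_coord_dist (a b : Fin d → ℤ) (i : Fin d) :
    (stp a b i - b i).natAbs = (a i - b i).natAbs - 1 := by
  simp only [stp]
  rcases lt_trichotomy (a i) (b i) with h | h | h
  · have : (b i - a i).sign = 1 := Int.sign_eq_one_of_pos (by omega)
    rw [this]; omega
  · simp [h]
  · have : (b i - a i).sign = -1 := Int.sign_eq_neg_one_of_neg (by omega)
    rw [this]; omega
lemma stp_coord_move_eq (a b : Fin d → ℤ) (i : Fin d) (h : a i ≠ b i) :
    (stp a b i - a i).natAbs = 1 := by
  simp only [stp]
  rcases lt_trichotomy (a i) (b i) with h' | h' | h'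
  · have : (b i - a i).sign = 1 := Int.sign_eq_one_of_pos (by omega)
    rw [this]; omega
  · exact absurd h' h
  · have : (b i - a i).sign = -1 := Int.sign_eq_neg_one_of_neg (by omega)
    rw [this]; omega
lemma nn_stp_dist (a b : Fin d → ℤ) : nn (stp a b - b) = nn (a - b) - 1 := by
  apply le_antisymm
  · refine nn_le fun i => ?_
    have h1 : ((stp a b - b) i).natAbs = (a i - b i).natAbs - 1 := stp_coord_dist a b i
    have h2 : ((a - b) i).natAbs ≤ nn (a - b) := natAbs_le_nn _ i
    simp only [Pi.sub_apply] at h1 h2 ⊢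
    omega
  · rcases (Finset.univ : Finset (Fin d)).eq_empty_or_nonempty with he | hne
    · have : nn (a - b) = 0 := by simp [nn, he]
      simp [this]
    · obtain ⟨i, _, hi⟩ := Finset.exists_mem_eq_sup Finset.univ hne
        (fun i => ((a - b) i).natAbs)
      have h1 : ((stp a b - b) i).natAbs = (a i - b i).natAbs - 1 := stp_coord_dist a b i
      have h2 : ((stp a b - b) i).natAbs ≤ nn (stp a b - b) := natAbs_le_nn _ i
      have h3 : nn (a - b) = ((a - b) i).natAbs := hi
      simp only [Pi.sub_apply] at *
      omega
lemma nn_stp_move {a b : Fin d → ℤ} (h : a ≠ b) : nn (stp a b - a) = 1 := by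
  apply le_antisymm
  · refine nn_le fun i => ?_
    have h1 : (stp a b i - a i).natAbs ≤ 1 := by
      simp only [stp]
      rcases lt_trichotomy (a i) (b i) with h' | h' | h'
      · have : (b i - a i).sign = 1 := Int.sign_eq_one_of_pos (by omega)
        rw [this]; omega
      · simp [h']
      · have : (b i - a i).sign = -1 := Int.sign_eq_neg_one_of_neg (by omega)
        rw [this]; omega
    simpa using h1
  · have : ∃ i, a i ≠ b i := by
      by_contra hc
      push_neg at hc
      exact h (funext hc)
    obtain ⟨i, hi⟩ := this
    have h1 : ((stp a b - a) i).natAbs = 1 := stp_coord_move_eq a b i hi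
    have := natAbs_le_nn (stp a b - a) i
    omega
lemma nn_stp_le (a b : Fin d → ℤ) : nn (stp a b) ≤ max (nn a) (nn b) := by
  refine nn_le fun i => ?_
  have h1 := natAbs_le_nn a i
  have h2 := natAbs_le_nn b i
  have h3 : (stp a b i).natAbs ≤ max (a i).natAbs (b i).natAbs := by
    simp only [stp]
    rcases lt_trichotomy (a i) (b i) with h' | h' | h'
    · have : (b i - a i).sign = 1 := Int.sign_eq_one_of_pos (by omega)
      rw [this]; omega
    · simp [h']
    · have : (b i - a i).sign = -1 := Int.sign_eq_neg_one_of_neg (by omega)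
      rw [this]; omega
  omega

lemma nn_zpt_sub_self (n : ℕ) : nn (zpt d n - zpt d n) = 0 := by
  simp [nn_eq_zero_iff]

/-- geodesic step: any vertex at distance `k+1` from `v` has a neighbor
at distance `k` from `v`. -/
lemma rho_step {v w : V d} {k : ℕ} (h : rho v w = k + 1) :
    ∃ t : V d, rho v t = k ∧ rho t w = 1 := by
  obtain (u | ⟨n, y⟩) := v <;> obtain (u' | ⟨m, y'⟩) := w
  · -- inl / inl
    simp only [rho] at h
    have hne : u' ≠ u := by
      rintro rfl
      rw [sub_self, nn_zero] at h
      omega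
    refine ⟨Sum.inl (stp u' u), ?_, ?_⟩
    · show nn (u - stp u' u) = k
      rw [nn_sub_comm, nn_stp_dist, nn_sub_comm u' u, h]
      omega
    · show nn (stp u' u - u') = 1
      exact nn_stp_move hne
  · -- inl / inr
    simp only [rho] at h
    by_cases h0 : stp y'.1 0 = 0
    · have h1 : nn (stp y'.1 0 - 0) = nn (y'.1 - 0) - 1 := nn_stp_dist _ _
      rw [h0] at h1
      simp only [sub_zero, sub_self] at h1
      rw [nn_zero] at h1
      have hy1 : nn y'.1 = 1 := by
        have := nn_pos_of_ne y'.2.2; omega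
      refine ⟨Sum.inl (zpt d m), ?_, ?_⟩
      · show nn (u - zpt d m) = k
        omega
      · show nn (zpt d m - zpt d m) + nn y'.1 = 1
        rw [nn_zpt_sub_self, hy1]
    · have hcube : nn (stp y'.1 0) ≤ m + 1 := by
        have := nn_stp_le y'.1 0
        rw [nn_zero] at this
        exact le_trans (le_trans this (by omega)) y'.2.1
      refine ⟨Sum.inr ⟨m, ⟨stp y'.1 0, hcube, h0⟩⟩, ?_, ?_⟩
      · show nn (u - zpt d m) + nn (stp y'.1 0) = k
        have h1 : nn (stp y'.1 0 - 0) = nn (y'.1 - 0) - 1 := nn_stp_dist _ _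
        simp only [sub_zero] at h1
        have := nn_pos_of_ne y'.2.2
        omega
      · show (if m = m then nn (stp y'.1 0 - y'.1) else _) = 1
        rw [if_pos rfl]
        exact nn_stp_move y'.2.2
  · -- inr / inl
    simp only [rho] at h
    by_cases hu : u' = zpt d n
    · subst hu
      rw [nn_zpt_sub_self] at h
      have hy : (0 : Fin d → ℤ) ≠ y.1 := fun hc => y.2.2 hc.symm
      have h1 : nn (stp 0 y.1 - 0) = 1 := nn_stp_move hy
      simp only [sub_zero] at h1
      refine ⟨Sum.inr ⟨n, ⟨stp 0 y.1, by omega, fun hc => by rw [hc, nn_zero] at h1; omega⟩⟩,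
        ?_, ?_⟩
      · show (if n = n then nn (y.1 - stp 0 y.1) else _) = k
        rw [if_pos rfl, nn_sub_comm, nn_stp_dist]
        simp only [zero_sub, nn_neg]
        omega
      · show nn (stp 0 y.1) + nn (zpt d n - zpt d n) = 1
        rw [nn_zpt_sub_self, h1]
    · refine ⟨Sum.inl (stp u' (zpt d n)), ?_, ?_⟩
      · show nn y.1 + nn (zpt d n - stp u' (zpt d n)) = k
        rw [nn_sub_comm, nn_stp_dist]
        have h2 : nn (zpt d n - u') = nn (u' - zpt d n) := nn_sub_comm _ _
        have h3 : 1 ≤ nn (u' - zpt d n) := nn_pos_of_ne (sub_ne_zero.mpr hu)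
        omega
      · show nn (stp u' (zpt d n) - u') = 1
        exact nn_stp_move hu
  · -- inr / inr
    rcases eq_or_ne n m with rfl | hnm
    · simp only [rho, eq_self_iff_true, if_true] at h
      have hne : y'.1 ≠ y.1 := by
        intro hc
        rw [hc, sub_self, nn_zero] at h
        omega
      by_cases h0 : stp y'.1 y.1 = 0
      · have h1 : nn (stp y'.1 y.1 - y.1) = nn (y'.1 - y.1) - 1 := nn_stp_dist _ _
        have h2 : nn (y'.1 - y.1) = k + 1 := by rw [nn_sub_comm]; exact h
        rw [h0] at h1
        simp only [zero_sub, nn_neg] at h1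
        have h3 : nn (stp y'.1 y.1 - y'.1) = 1 := nn_stp_move hne
        rw [h0] at h3
        simp only [zero_sub, nn_neg] at h3
        refine ⟨Sum.inl (zpt d n), ?_, ?_⟩
        · show nn y.1 + nn (zpt d n - zpt d n) = k
          rw [nn_zpt_sub_self]
          omega
        · show nn (zpt d n - zpt d n) + nn y'.1 = 1
          rw [nn_zpt_sub_self, h3]
      · have hcube : nn (stp y'.1 y.1) ≤ n + 1 := by
          have h1 := nn_stp_le y'.1 y.1
          exact le_trans h1 (max_le y'.2.1 y.2.1)
        refine ⟨Sum.inr ⟨n, ⟨stp y'.1 y.1, hcube, h0⟩⟩, ?_, ?_⟩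
        · show (if n = n then nn (y.1 - stp y'.1 y.1) else _) = k
          rw [if_pos rfl, nn_sub_comm, nn_stp_dist, nn_sub_comm, h]
          omega
        · show (if n = n then nn (stp y'.1 y.1 - y'.1) else _) = 1
          rw [if_pos rfl]
          exact nn_stp_move hne
    · simp only [rho, if_neg hnm] at h
      by_cases h0 : stp y'.1 0 = 0
      · have h1 : nn (stp y'.1 0 - 0) = nn (y'.1 - 0) - 1 := nn_stp_dist _ _
        rw [h0] at h1
        simp only [sub_zero, sub_self] at h1
        rw [nn_zero] at h1
        have hy1 : nn y'.1 = 1 := by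
          have := nn_pos_of_ne y'.2.2; omega
        refine ⟨Sum.inl (zpt d m), ?_, ?_⟩
        · show nn y.1 + nn (zpt d n - zpt d m) = k
          omega
        · show nn (zpt d m - zpt d m) + nn y'.1 = 1
          rw [nn_zpt_sub_self, hy1]
      · have hcube : nn (stp y'.1 0) ≤ m + 1 := by
          have h1 := nn_stp_le y'.1 0
          rw [nn_zero] at h1
          exact le_trans (le_trans h1 (by omega)) y'.2.1
        refine ⟨Sum.inr ⟨m, ⟨stp y'.1 0, hcube, h0⟩⟩, ?_, ?_⟩
        · show (if n = m then _ else nn y.1 + nn (zpt d n - zpt d m) + nn (stp y'.1 0)) = k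
          rw [if_neg hnm]
          have h1 : nn (stp y'.1 0 - 0) = nn (y'.1 - 0) - 1 := nn_stp_dist _ _
          simp only [sub_zero] at h1
          have := nn_pos_of_ne y'.2.2
          omega
        · show (if m = m then nn (stp y'.1 0 - y'.1) else _) = 1
          rw [if_pos rfl]
          exact nn_stp_move y'.2.2

variable (d) in
def G : SimpleGraph (V d) where
  Adj v w := rho v w = 1
  symm := by constructor; intro v w h; rwa [rho_comm] at h
  loopless := by constructor; intro v h; rw [rho_self] at h; omega

lemma exists_walk (v w : V d) : ∃ p : (G d).Walk v w, p.length = rho v w := by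
  obtain ⟨k, hk⟩ : ∃ k, rho v w = k := ⟨_, rfl⟩
  induction k generalizing w with
  | zero =>
    obtain rfl : v = w := rho_eq_zero_iff.mp hk
    exact ⟨SimpleGraph.Walk.nil, by simp [hk]⟩
  | succ k ih =>
    obtain ⟨t, ht1, ht2⟩ := rho_step hk
    obtain ⟨p, hp⟩ := ih t ht1
    have ht2' : (G d).Adj t w := ht2
    exact ⟨p.concat ht2', by rw [SimpleGraph.Walk.length_concat, hp, ht1, hk]⟩

lemma rho_le_length {v w : V d} (p : (G d).Walk v w) : rho v w ≤ p.length := by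
  induction p with
  | nil => simp [rho_self]
  | cons h q ih =>
    rename_i a b c
    have tri := rho_tri a b c
    have : rho a b = 1 := h
    simp only [SimpleGraph.Walk.length_cons]
    omega

lemma connected : (G d).Connected := by
  rw [SimpleGraph.connected_iff]
  exact ⟨fun v w => ⟨(exists_walk v w).choose⟩, ⟨Sum.inl 0⟩⟩

lemma dist_eq (v w : V d) : (G d).dist v w = rho v w := by
  apply le_antisymm
  · obtain ⟨p, hp⟩ := exists_walk v w
    exact hp ▸ SimpleGraph.dist_le p
  · obtain ⟨p, hp⟩ := (((connected (d := d)).preconnected) v w).exists_walk_length_eq_dist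
    calc rho v w ≤ p.length := rho_le_length p
      _ = (G d).dist v w := hp

variable (d) in
def ctr : V d → (Fin d → ℤ)
  | .inl u => u
  | .inr ⟨n, y⟩ => zpt d n + y.1

variable (d) in
def psi : V d → Bool × (Fin d → ℤ)
  | .inl u => (false, u)
  | .inr ⟨n, y⟩ => (true, zpt d n + y.1)

lemma psi_snd (v : V d) : (psi d v).2 = ctr d v := by
  obtain (u | ⟨n, y⟩) := v <;> rfl

lemma nn_ctr_le_rho (x v : V d) : nn (ctr d v - ctr d x) ≤ rho x v := by
  obtain (u | ⟨n, a⟩) := x <;> obtain (w | ⟨m, b⟩) := v <;> simp only [ctr, rho]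
  · rw [nn_sub_comm]
  · have he : zpt d m + b.1 - u = -(u - zpt d m) + b.1 := by abel
    rw [he]
    calc nn (-(u - zpt d m) + b.1) ≤ nn (-(u - zpt d m)) + nn b.1 := nn_add_le _ _
      _ = nn (u - zpt d m) + nn b.1 := by rw [nn_neg]
  · have he : w - (zpt d n + a.1) = -a.1 + (w - zpt d n) := by abel
    rw [he]
    calc nn (-a.1 + (w - zpt d n)) ≤ nn (-a.1) + nn (w - zpt d n) := nn_add_le _ _
      _ = nn a.1 + nn (zpt d n - w) := by rw [nn_neg, nn_sub_comm]
  · rcases eq_or_ne n m with rfl | hnm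
    · rw [if_pos rfl]
      have he : zpt d n + b.1 - (zpt d n + a.1) = b.1 - a.1 := by abel
      rw [he, nn_sub_comm]
    · rw [if_neg hnm]
      have he : zpt d m + b.1 - (zpt d n + a.1) = -a.1 + (zpt d m - zpt d n) + b.1 := by
        abel
      rw [he]
      calc nn (-a.1 + (zpt d m - zpt d n) + b.1)
          ≤ nn (-a.1 + (zpt d m - zpt d n)) + nn b.1 := nn_add_le _ _
        _ ≤ nn (-a.1) + nn (zpt d m - zpt d n) + nn b.1 :=
            Nat.add_le_add_right (nn_add_le _ _) _
        _ = nn a.1 + nn (zpt d n - zpt d m) + nn b.1 := by rw [nn_neg, nn_sub_comm (zpt d m)]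

lemma aseq_strict {n m : ℕ} (h : n ≠ m) :
    ¬ (aseq n - aseq m).natAbs ≤ n + m + 2 := by
  intro hc
  rcases Nat.lt_or_ge n m with hlt | hge
  · have h1 : aseq m - aseq n = ((m : ℤ) - n) * ((m : ℤ) + n + 4) := by
      simp only [aseq]; ring
    have h2 : ((m : ℤ) - n) ≥ 1 := by
      have : (n : ℤ) < m := by exact_mod_cast hlt
      omega
    have h3 : aseq m - aseq n ≥ (m : ℤ) + n + 4 := by
      rw [h1]
      nlinarith [Int.add_one_le_iff.mpr (show (0:ℤ) < (m:ℤ) + n + 4 by positivity)]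
    have h4 : (aseq n - aseq m).natAbs = (aseq m - aseq n).natAbs := by
      omega
    omega
  · have hlt : m < n := lt_of_le_of_ne hge (Ne.symm h)
    have h1 : aseq n - aseq m = ((n : ℤ) - m) * ((n : ℤ) + m + 4) := by
      simp only [aseq]; ring
    have h2 : ((n : ℤ) - m) ≥ 1 := by
      have : (m : ℤ) < n := by exact_mod_cast hlt
      omega
    have h3 : aseq n - aseq m ≥ (n : ℤ) + m + 4 := by
      rw [h1]
      nlinarith
    omega

lemma psi_inj (hd : 0 < d) : Function.Injective (psi d) := by
  intro v w h
  obtain (u | ⟨n, a⟩) := v <;> obtain (u' | ⟨m, b⟩) := w <;>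
    simp only [psi, Prod.mk.injEq] at h
  · rw [h.2]
  · exact absurd h.1 (by simp)
  · exact absurd h.1 (by simp)
  · obtain ⟨-, h2⟩ := h
    rcases eq_or_ne n m with rfl | hnm
    · have : a.1 = b.1 := by
        have := add_left_cancel h2
        exact this
      have hab : a = b := Subtype.ext this
      rw [hab]
    · exfalso
      set i0 : Fin d := ⟨0, hd⟩
      have hz : ∀ p : ℕ, zpt d p i0 = aseq p := fun p => by simp [zpt, i0]
      have heq : aseq n + a.1 i0 = aseq m + b.1 i0 := by
        have := congrFun h2 i0
        simpa [hz] using this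
      have ha : (a.1 i0).natAbs ≤ n + 1 := le_trans (natAbs_le_nn _ _) a.2.1
      have hb : (b.1 i0).natAbs ≤ m + 1 := le_trans (natAbs_le_nn _ _) b.2.1
      exact aseq_strict hnm (by omega)

variable (d) in
def rBall (x : V d) (r : ℕ) : Set (V d) := {v | rho x v ≤ r}

lemma ncard_Icc_int (lo hi : Fin d → ℤ) :
    (Set.Icc lo hi).ncard = ∏ i, (hi i - lo i + 1).toNat := by
  rw [← Finset.coe_Icc, Set.ncard_coe_finset, Pi.card_Icc]
  simp only [Int.card_Icc]
  refine Finset.prod_congr rfl fun i _ => ?_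
  congr 1
  ring

lemma rball_subset_box (x : V d) (r : ℕ) :
    rBall d x r ⊆ psi d ⁻¹'
      ((Set.univ : Set Bool) ×ˢ
        Set.Icc (ctr d x - fun _ => (r : ℤ)) (ctr d x + fun _ => (r : ℤ))) := by
  intro v hv
  simp only [Set.mem_preimage, Set.mem_prod, Set.mem_univ, true_and, Set.mem_Icc]
  constructor <;> intro i <;>
  · have h1 : ((ctr d v - ctr d x) i).natAbs ≤ r :=
      le_trans (le_trans (natAbs_le_nn _ i) (nn_ctr_le_rho x v)) hv
    have h2 : (psi d v).2 = ctr d v := psi_snd v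
    simp only [Pi.sub_apply] at h1
    rw [h2]
    simp only [Pi.sub_apply, Pi.add_apply]
    omega

lemma box_finite (x : V d) (r : ℕ) :
    ((Set.univ : Set Bool) ×ˢ
      Set.Icc (ctr d x - fun _ => (r : ℤ)) (ctr d x + fun _ => (r : ℤ))).Finite :=
  (Set.finite_univ).prod (Set.finite_Icc _ _)

lemma rball_finite (hd : 0 < d) (x : V d) (r : ℕ) : (rBall d x r).Finite := by
  have := (box_finite x r).preimage (f := psi d) (Set.injOn_of_injective (psi_inj hd))
  exact this.subset (rball_subset_box x r)

lemma rball_card_le (hd : 0 < d) (x : V d) (r : ℕ) :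
    (rBall d x r).ncard ≤ 2 * (2 * r + 1) ^ d := by
  have h1 : (rBall d x r).ncard ≤
      ((Set.univ : Set Bool) ×ˢ
        Set.Icc (ctr d x - fun _ => (r : ℤ)) (ctr d x + fun _ => (r : ℤ))).ncard := by
    calc (rBall d x r).ncard = (psi d '' rBall d x r).ncard :=
          (Set.ncard_image_of_injective _ (psi_inj hd)).symm
      _ ≤ _ := Set.ncard_le_ncard (by
            rw [Set.image_subset_iff]; exact rball_subset_box x r) (box_finite x r)
  refine le_trans h1 ?_
  have hcoe : (Set.univ : Set Bool) ×ˢ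
      Set.Icc (ctr d x - fun _ => (r : ℤ)) (ctr d x + fun _ => (r : ℤ)) =
      ↑((Finset.univ : Finset Bool) ×ˢ
        Finset.Icc (ctr d x - fun _ => (r : ℤ)) (ctr d x + fun _ => (r : ℤ))) := by
    rw [Finset.coe_product, Finset.coe_univ, Finset.coe_Icc]
  rw [hcoe, Set.ncard_coe_finset, Finset.card_product, Finset.card_univ, Pi.card_Icc]
  have h3 : ∀ i : Fin d, (Finset.Icc (((ctr d x - fun _ => (r:ℤ)) : Fin d → ℤ) i)
      (((ctr d x + fun _ => (r:ℤ)) : Fin d → ℤ) i)).card = 2 * r + 1 := by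
    intro i
    rw [Int.card_Icc]
    have e1 : ((ctr d x - fun _ => (r:ℤ)) : Fin d → ℤ) i = ctr d x i - r := rfl
    have e2 : ((ctr d x + fun _ => (r:ℤ)) : Fin d → ℤ) i = ctr d x i + r := rfl
    rw [e1, e2]
    omega
  rw [Finset.prod_congr rfl (fun i _ => h3 i), Finset.prod_const]
  rw [Fintype.card_bool]
  simp

lemma prod_ge_pow {f : Fin d → ℕ} {r : ℕ} (h : ∀ i, r ≤ f i) :
    r ^ d ≤ ∏ i, f i := by
  calc r ^ d = ∏ _i : Fin d, r := by
        rw [Finset.prod_const, Finset.card_univ, Fintype.card_fin]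
    _ ≤ ∏ i, f i := Finset.prod_le_prod' fun i _ => h i

lemma ncard_ge_of_image_Icc_subset {lo hi : Fin d → ℤ} {f : (Fin d → ℤ) → V d}
    (hinj : Set.InjOn f (Set.Icc lo hi)) {S : Set (V d)} (hS : S.Finite)
    (hsub : f '' Set.Icc lo hi ⊆ S) :
    ∏ i, (hi i - lo i + 1).toNat ≤ S.ncard := by
  rw [← ncard_Icc_int, ← Set.ncard_image_of_injOn hinj]
  exact Set.ncard_le_ncard hsub hS

lemma mem_Icc_pi {lo hi w : Fin d → ℤ} :
    w ∈ Set.Icc lo hi ↔ ∀ i, lo i ≤ w i ∧ w i ≤ hi i := by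
  simp only [Set.mem_Icc, Pi.le_def]
  exact ⟨fun ⟨h1, h2⟩ i => ⟨h1 i, h2 i⟩, fun h => ⟨fun i => (h i).1, fun i => (h i).2⟩⟩

lemma rball_card_ge (hd : 0 < d) (x : V d) (r : ℕ) (hr : 1 ≤ r) :
    r ^ d ≤ (rBall d x r).ncard := by
  have hfin := rball_finite hd x r
  obtain (u | ⟨n, y⟩) := x
  · -- center in Z^d : the plain box works
    refine le_trans (prod_ge_pow (f := fun i =>
        (((u + fun _ => (r:ℤ)) : Fin d → ℤ) i - ((u - fun _ => (r:ℤ)) : Fin d → ℤ) i + 1).toNat) ?_)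
      (ncard_ge_of_image_Icc_subset (f := Sum.inl)
        (Set.injOn_of_injective Sum.inl_injective) hfin ?_)
    · intro i
      simp only [Pi.add_apply, Pi.sub_apply]
      omega
    · rintro - ⟨w, hw, rfl⟩
      rw [mem_Icc_pi] at hw
      show rho (Sum.inl u) (Sum.inl w) ≤ r
      show nn (u - w) ≤ r
      refine nn_le fun i => ?_
      obtain ⟨h1, h2⟩ := hw i
      have e1 : ((u - fun _ => (r:ℤ)) : Fin d → ℤ) i = u i - r := rfl
      have e2 : ((u + fun _ => (r:ℤ)) : Fin d → ℤ) i = u i + r := rfl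
      rw [e1] at h1; rw [e2] at h2
      simp only [Pi.sub_apply]
      omega
  · rcases le_or_gt (2 * nn y.1) r with hy | hy
    · -- shallow center: use a box in Z^d around the attach point
      set q : ℕ := r - nn y.1 with hq
      refine le_trans (prod_ge_pow (f := fun i =>
          (((zpt d n + fun _ => (q:ℤ)) : Fin d → ℤ) i - ((zpt d n - fun _ => (q:ℤ)) : Fin d → ℤ) i + 1).toNat) ?_)
        (ncard_ge_of_image_Icc_subset (f := Sum.inl)
          (Set.injOn_of_injective Sum.inl_injective) hfin ?_)
      · intro i
        simp only [Pi.add_apply, Pi.sub_apply]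
        have : r ≤ 2 * q := by omega
        omega
      · rintro - ⟨w, hw, rfl⟩
        rw [mem_Icc_pi] at hw
        show nn y.1 + nn (zpt d n - w) ≤ r
        have h1 : nn (zpt d n - w) ≤ q := by
          refine nn_le fun i => ?_
          obtain ⟨ha, hb⟩ := hw i
          have e1 : ((zpt d n - fun _ => (q:ℤ)) : Fin d → ℤ) i = zpt d n i - q := rfl
          have e2 : ((zpt d n + fun _ => (q:ℤ)) : Fin d → ℤ) i = zpt d n i + q := rfl
          rw [e1] at ha; rw [e2] at hb
          simp only [Pi.sub_apply]
          omega
        omega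
    · -- deep center: use a box inside the balloon
      set s : ℕ := n + 1 with hs
      have hys : nn y.1 ≤ s := y.2.1
      have hr2s : r ≤ 2 * s := by omega
      set lo : Fin d → ℤ := fun i => max (y.1 i - r) (-(s:ℤ)) with hlo
      set hi : Fin d → ℤ := fun i => min (y.1 i + r) (s:ℤ) with hhi
      have hcoord : ∀ i, (y.1 i).natAbs ≤ s := fun i => le_trans (natAbs_le_nn _ i) hys
      set f : (Fin d → ℤ) → V d := fun w =>
        if h : nn w ≤ n + 1 ∧ w ≠ 0 then Sum.inr ⟨n, ⟨w, h⟩⟩ else Sum.inl (zpt d n)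
        with hf
      have hcube : ∀ w ∈ Set.Icc lo hi, nn w ≤ n + 1 := by
        intro w hw
        rw [mem_Icc_pi] at hw
        refine nn_le fun i => ?_
        obtain ⟨ha, hb⟩ := hw i
        simp only [hlo, hhi] at ha hb
        have := hcoord i
        omega
      have hfval : ∀ w (hw : w ∈ Set.Icc lo hi) (hw0 : w ≠ 0),
          f w = Sum.inr ⟨n, ⟨w, hcube w hw, hw0⟩⟩ := by
        intro w hw hw0
        simp only [hf]
        rw [dif_pos ⟨hcube w hw, hw0⟩]
      have hinj : Set.InjOn f (Set.Icc lo hi) := by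
        intro w1 h1 w2 h2 heq
        by_cases hz1 : w1 = 0 <;> by_cases hz2 : w2 = 0
        · rw [hz1, hz2]
        · rw [hfval w2 h2 hz2] at heq
          subst hz1
          simp only [hf, dif_neg (by simp : ¬(nn (0 : Fin d → ℤ) ≤ n + 1 ∧ (0:Fin d → ℤ) ≠ 0))]
            at heq
          exact absurd heq (by simp)
        · rw [hfval w1 h1 hz1] at heq
          subst hz2
          simp only [hf, dif_neg (by simp : ¬(nn (0 : Fin d → ℤ) ≤ n + 1 ∧ (0:Fin d → ℤ) ≠ 0))]
            at heq
          exact absurd heq (by simp)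
        · rw [hfval w1 h1 hz1, hfval w2 h2 hz2] at heq
          have h3 := congrArg (ctr d) heq
          simp only [ctr] at h3
          exact add_left_cancel h3
      refine le_trans (prod_ge_pow (f := fun i => (hi i - lo i + 1).toNat) ?_)
        (ncard_ge_of_image_Icc_subset hinj hfin ?_)
      · intro i
        simp only [hlo, hhi]
        have := hcoord i
        omega
      · rintro - ⟨w, hw, rfl⟩
        by_cases hw0 : w = 0
        · subst hw0
          have h0 : ∀ i, (y.1 i).natAbs ≤ r := by
            intro i
            have := (mem_Icc_pi.mp hw) i
            simp only [hlo, hhi, Pi.zero_apply] at this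
            omega
          simp only [hf, dif_neg (by simp : ¬(nn (0 : Fin d → ℤ) ≤ n + 1 ∧ (0:Fin d → ℤ) ≠ 0))]
          show nn y.1 + nn (zpt d n - zpt d n) ≤ r
          rw [nn_zpt_sub_self]
          have := nn_le h0
          omega
        · rw [hfval w hw hw0]
          show (if n = n then nn (y.1 - w) else _) ≤ r
          rw [if_pos rfl]
          refine nn_le fun i => ?_
          have := (mem_Icc_pi.mp hw) i
          simp only [hlo, hhi] at this
          simp only [Pi.sub_apply]
          omega

lemma gBall_eq (x : V d) (r : ℕ) : gBall (G d) x r = rBall d x r := by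
  ext v
  simp only [gBall, rBall, Set.mem_setOf_eq, dist_eq]

lemma sphere_subset_bdry (x : V d) (r : ℕ) :
    {v : V d | rho x v = r + 1} ⊆ gBdry (G d) (rBall d x r) := by
  intro v hv
  simp only [Set.mem_setOf_eq] at hv
  obtain ⟨t, ht1, ht2⟩ := rho_step hv
  constructor
  · exact ⟨t, by simp only [rBall, Set.mem_setOf_eq]; omega,
      by rw [dist_eq, rho_comm]; omega⟩
  · exact ⟨v, by simp only [rBall, Set.mem_compl_iff, Set.mem_setOf_eq]; omega,
      by rw [dist_eq, rho_self]; omega⟩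

lemma bdry_subset_ball (x : V d) (r : ℕ) :
    gBdry (G d) (rBall d x r) ⊆ rBall d x (r + 1) := by
  rintro w ⟨⟨a, ha, hwa⟩, -⟩
  simp only [rBall, Set.mem_setOf_eq] at ha ⊢
  rw [dist_eq] at hwa
  have h1 := rho_tri x a w
  have h2 : rho a w = rho w a := rho_comm _ _
  omega

lemma bdry_finite (hd0 : 0 < d) (x : V d) (r : ℕ) :
    (gBdry (G d) (rBall d x r)).Finite :=
  (rball_finite hd0 x (r + 1)).subset (bdry_subset_ball x r)

lemma bdry_ge_family (hd0 : 0 < d) {x : V d} {r J : ℕ} {f : ℤ → V d}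
    (hmem : ∀ j : ℤ, j ∈ Set.Icc (0:ℤ) (J:ℤ) → rho x (f j) = r + 1)
    (hinj : Set.InjOn f (Set.Icc (0:ℤ) (J:ℤ))) :
    J + 1 ≤ (gBdry (G d) (rBall d x r)).ncard := by
  have h1 : f '' Set.Icc (0:ℤ) (J:ℤ) ⊆ gBdry (G d) (rBall d x r) := by
    rintro - ⟨j, hj, rfl⟩
    exact sphere_subset_bdry x r (hmem j hj)
  calc J + 1 = (Set.Icc (0:ℤ) (J:ℤ)).ncard := by
        rw [← Finset.coe_Icc, Set.ncard_coe_finset, Int.card_Icc]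
        omega
    _ = (f '' Set.Icc (0:ℤ) (J:ℤ)).ncard := (Set.ncard_image_of_injOn hinj).symm
    _ ≤ _ := Set.ncard_le_ncard h1 (bdry_finite hd0 x r)

lemma nn_two_coord {i0 i1 : Fin d} (h01 : i0 ≠ i1) {A B : ℤ} (hBA : B.natAbs ≤ A.natAbs) :
    nn (fun i => if i = i0 then A else if i = i1 then B else 0) = A.natAbs := by
  apply le_antisymm
  · refine nn_le fun i => ?_
    by_cases h0 : i = i0
    · simp [h0]
    · by_cases h1 : i = i1
      · simp only [if_neg h0, if_pos h1]; omega
      · simp [h0, h1]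
  · have := natAbs_le_nn (fun i => if i = i0 then A else if i = i1 then B else 0) i0
    simpa using this

lemma bdry_card_ge (hd : 2 ≤ d) (x : V d) (r : ℕ) (hr : 1 ≤ r) :
    r ≤ 2 * (gBdry (G d) (rBall d x r)).ncard := by
  have hd0 : 0 < d := by omega
  have hd1 : 1 < d := by omega
  set i0 : Fin d := ⟨0, hd0⟩ with hi0def
  set i1 : Fin d := ⟨1, hd1⟩ with hi1def
  have hi01 : i0 ≠ i1 := by
    simp [hi0def, hi1def, Fin.ext_iff]
  obtain (u | ⟨n, y⟩) := x
  · -- center in the grid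
    set g : ℤ → (Fin d → ℤ) := fun j => fun i =>
      if i = i0 then ((r : ℤ) + 1) else if i = i1 then j else 0 with hg
    have hmem : ∀ j : ℤ, j ∈ Set.Icc (0:ℤ) ((r+1 : ℕ):ℤ) →
        rho (Sum.inl u) (Sum.inl (u + g j)) = r + 1 := by
      intro j hj
      simp only [Set.mem_Icc] at hj
      show nn (u - (u + g j)) = r + 1
      have he : u - (u + g j) = -(g j) := by abel
      rw [he, nn_neg, hg]
      have := nn_two_coord hi01 (A := (r:ℤ)+1) (B := j) (by push_cast at hj ⊢; omega)
      rw [this]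
      omega
    have hinj : Set.InjOn (fun j => Sum.inl (u + g j) : ℤ → V d)
        (Set.Icc (0:ℤ) ((r+1 : ℕ):ℤ)) := by
      intro j1 _ j2 _ heq
      simp only [Sum.inl.injEq] at heq
      have h2 := congrFun (add_left_cancel heq) i1
      simpa [hg, if_neg (Ne.symm hi01)] using h2
    have := bdry_ge_family hd0 (x := Sum.inl u) (r := r) (J := r + 1)
      (f := fun j => Sum.inl (u + g j)) hmem hinj
    omega
  · set k := r + 1 with hk
    set h := nn y.1 with hh
    set s := n + 1 with hs
    have hys : h ≤ s := y.2.1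
    rcases le_or_gt (2*h) k with hsh | hdeep
    · -- shallow balloon center
      set g : ℤ → (Fin d → ℤ) := fun j => fun i =>
        if i = i0 then ((k - h : ℕ) : ℤ) else if i = i1 then j else 0 with hg
      have hmem : ∀ j : ℤ, j ∈ Set.Icc (0:ℤ) ((k - h : ℕ):ℤ) →
          rho (Sum.inr ⟨n, y⟩) (Sum.inl (zpt d n + g j)) = r + 1 := by
      -- rho = nn y.1 + nn (zpt - (zpt + g j))
        intro j hj
        simp only [Set.mem_Icc] at hj
        show nn y.1 + nn (zpt d n - (zpt d n + g j)) = r + 1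
        have he : zpt d n - (zpt d n + g j) = -(g j) := by abel
        rw [he, nn_neg, hg]
        have := nn_two_coord hi01 (A := ((k - h : ℕ):ℤ)) (B := j)
          (by push_cast at hj ⊢; omega)
        rw [this]
        have : ((k - h : ℕ) : ℤ).natAbs = k - h := by omega
        omega
      have hinj : Set.InjOn (fun j => Sum.inl (zpt d n + g j) : ℤ → V d)
          (Set.Icc (0:ℤ) ((k - h : ℕ):ℤ)) := by
        intro j1 _ j2 _ heq
        simp only [Sum.inl.injEq] at heq
        have h2 := congrFun (add_left_cancel heq) i1
        simpa [hg, if_neg (Ne.symm hi01)] using h2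
      have := bdry_ge_family hd0 (x := Sum.inr ⟨n, y⟩) (r := r) (J := k - h)
        (f := fun j => Sum.inl (zpt d n + g j)) hmem hinj
      omega
    · -- deep balloon center
      have hk2 : 2 ≤ k := by omega
      have hh1 : 1 ≤ h := by omega
      obtain ⟨iM, -, hiM⟩ := Finset.exists_mem_eq_sup (Finset.univ : Finset (Fin d))
        ⟨i0, Finset.mem_univ i0⟩ (fun i => (y.1 i).natAbs)
      have hyiM : (y.1 iM).natAbs = h := hiM.symm
      set iN : Fin d := if iM = i0 then i1 else i0 with hiN
      have hMN : iN ≠ iM := by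
        rcases eq_or_ne iM i0 with h1 | h1
        · rw [hiN, if_pos h1, h1]; exact Ne.symm hi01
        · rw [hiN, if_neg h1]; exact Ne.symm h1
      set eM : ℤ := if 0 ≤ y.1 iM then 1 else -1 with heM
      set eN : ℤ := if 0 ≤ y.1 iN then 1 else -1 with heN
      set J : ℕ := min k s with hJ
      set g : ℤ → (Fin d → ℤ) := fun j => fun i =>
        if i = iM then y.1 iM - eM * k else if i = iN then y.1 iN - eN * j else y.1 i
        with hg
      have hyiMabs : ∀ i, (y.1 i).natAbs ≤ s := fun i => le_trans (natAbs_le_nn _ i) hys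
      -- coordinate facts
      have hgM : ∀ j : ℤ, (g j iM - y.1 iM).natAbs = k ∧ (g j iM).natAbs ≤ s := by
        intro j
        have e1 : g j iM = y.1 iM - eM * k := by rw [hg]; simp
        rw [e1, heM]
        have := hyiMabs iM
        split_ifs with hsgn <;> constructor <;> omega
      have hgN : ∀ j : ℤ, 0 ≤ j → j ≤ (J:ℤ) →
          (g j iN - y.1 iN).natAbs ≤ k ∧ (g j iN).natAbs ≤ s := by
        intro j hj0 hj1
        have e1 : g j iN = y.1 iN - eN * j := by
          rw [hg]; simp [if_neg hMN]
        rw [e1, heN]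
        have := hyiMabs iN
        have hJk : (J:ℤ) ≤ k := by rw [hJ]; push_cast; omega
        have hJs : (J:ℤ) ≤ s := by rw [hJ]; push_cast; omega
        split_ifs with hsgn <;> constructor <;> omega
      have hgO : ∀ j : ℤ, ∀ i, i ≠ iM → i ≠ iN → g j i = y.1 i := by
        intro j i h1 h2
        rw [hg]; simp [if_neg h1, if_neg h2]
      -- cube bound
      have hcube : ∀ j : ℤ, 0 ≤ j → j ≤ (J:ℤ) → nn (g j) ≤ n + 1 := by
        intro j hj0 hj1
        refine nn_le fun i => ?_
        rcases eq_or_ne i iM with rfl | h1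
        · exact (hgM j).2
        · rcases eq_or_ne i iN with rfl | h2
          · exact (hgN j hj0 hj1).2
          · rw [hgO j i h1 h2]; exact hyiMabs i
      -- distance
      have hdist : ∀ j : ℤ, 0 ≤ j → j ≤ (J:ℤ) → nn (y.1 - g j) = k := by
        intro j hj0 hj1
        apply le_antisymm
        · refine nn_le fun i => ?_
          rcases eq_or_ne i iM with rfl | h1
          · have := (hgM j).1
            simp only [Pi.sub_apply]
            omega
          · rcases eq_or_ne i iN with rfl | h2
            · have := (hgN j hj0 hj1).1
              simp only [Pi.sub_apply]
              omega
            · simp only [Pi.sub_apply]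
              rw [hgO j i h1 h2]
              omega
        · have h1 := natAbs_le_nn (y.1 - g j) iM
          have h2 := (hgM j).1
          simp only [Pi.sub_apply] at h1
          omega
      set f : ℤ → V d := fun j =>
        if hz : nn (g j) ≤ n + 1 ∧ g j ≠ 0 then Sum.inr ⟨n, ⟨g j, hz⟩⟩
        else Sum.inl (zpt d n) with hf
      have hmem : ∀ j : ℤ, j ∈ Set.Icc (0:ℤ) ((J:ℕ):ℤ) →
          rho (Sum.inr ⟨n, y⟩) (f j) = r + 1 := by
        intro j hj
        simp only [Set.mem_Icc] at hj
        by_cases hz : g j = 0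
        · have hzM : g j iM = 0 := by rw [hz]; rfl
          have h2 := (hgM j).1
          rw [hzM] at h2
          -- then h = k
          have hhk : h = k := by omega
          simp only [hf]
          rw [dif_neg (by simp [hz])]
          show nn y.1 + nn (zpt d n - zpt d n) = r + 1
          rw [nn_zpt_sub_self]
          omega
        · simp only [hf]
          rw [dif_pos ⟨hcube j hj.1 hj.2, hz⟩]
          show (if n = n then nn (y.1 - g j) else _) = r + 1
          rw [if_pos rfl, hdist j hj.1 hj.2]
      have hinj : Set.InjOn f (Set.Icc (0:ℤ) ((J:ℕ):ℤ)) := by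
        intro j1 hj1 j2 hj2 heq
        simp only [Set.mem_Icc] at hj1 hj2
        have keyN : ∀ {ja jb : ℤ}, g ja = g jb → ja = jb := by
          intro ja jb hgg
          have := congrFun hgg iN
          rw [hg] at this
          simp only [if_neg hMN] at this
          rw [heN] at this
          split_ifs at this <;> omega
        by_cases hz1 : g j1 = 0 <;> by_cases hz2 : g j2 = 0
        · exact keyN (hz1.trans hz2.symm)
        · simp only [hf] at heq
          rw [dif_neg (by simp [hz1]), dif_pos ⟨hcube j2 hj2.1 hj2.2, hz2⟩] at heq
          exact absurd heq (by simp)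
        · simp only [hf] at heq
          rw [dif_pos ⟨hcube j1 hj1.1 hj1.2, hz1⟩, dif_neg (by simp [hz2])] at heq
          exact absurd heq (by simp)
        · simp only [hf] at heq
          rw [dif_pos ⟨hcube j1 hj1.1 hj1.2, hz1⟩,
            dif_pos ⟨hcube j2 hj2.1 hj2.2, hz2⟩] at heq
          have h3 := congrArg (ctr d) heq
          simp only [ctr] at h3
          exact keyN (add_left_cancel h3)
      have := bdry_ge_family hd0 (x := Sum.inr ⟨n, y⟩) (r := r) (J := J) hmem hinj
      have hJbound : k + 1 ≤ 2 * (J + 1) := by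
        rw [hJ]
        rcases le_or_gt k s with hks | hks
        · omega
        · omega
      omega

lemma bdd_degree (hd0 : 0 < d) : BddDegree (G d) := by
  refine ⟨2 * 3 ^ d, fun v => ?_⟩
  have h1 : (G d).neighborSet v ⊆ rBall d v 1 := by
    intro w hw
    have : rho v w = 1 := hw
    simp only [rBall, Set.mem_setOf_eq]
    omega
  calc ((G d).neighborSet v).ncard ≤ (rBall d v 1).ncard :=
        Set.ncard_le_ncard h1 (rball_finite hd0 v 1)
    _ ≤ 2 * (2 * 1 + 1) ^ d := rball_card_le hd0 v 1
    _ = 2 * 3 ^ d := by norm_num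

lemma poly_growth (hd0 : 0 < d) : PolyGrowth (G d) d := by
  refine ⟨2 * 3 ^ d, ?_, fun x r hr => ?_⟩
  · have : (1:ℝ) ≤ 3 ^ d := one_le_pow₀ (by norm_num)
    nlinarith
  rw [gBall_eq]
  constructor
  · have h1 : (r:ℝ) ^ d ≤ ((rBall d x r).ncard : ℝ) := by
      have := rball_card_ge hd0 x r hr
      calc (r:ℝ) ^ d = ((r ^ d : ℕ) : ℝ) := by push_cast; ring
        _ ≤ _ := by exact_mod_cast this
    have h2 : (0:ℝ) < 2 * 3 ^ d := by positivity
    have h3 : ((2 * 3 ^ d : ℝ))⁻¹ ≤ 1 := by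
      rw [inv_le_one_iff₀]
      right
      have : (1:ℝ) ≤ 3 ^ d := one_le_pow₀ (by norm_num)
      nlinarith
    calc (2 * 3 ^ d : ℝ)⁻¹ * (r:ℝ) ^ d ≤ 1 * (r:ℝ) ^ d := by
          apply mul_le_mul_of_nonneg_right h3 (by positivity)
      _ = (r:ℝ) ^ d := one_mul _
      _ ≤ _ := h1
  · have h1 : (rBall d x r).ncard ≤ 2 * 3 ^ d * r ^ d := by
      calc (rBall d x r).ncard ≤ 2 * (2 * r + 1) ^ d := rball_card_le hd0 x r
        _ ≤ 2 * (3 * r) ^ d := by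
            have : (2 * r + 1) ^ d ≤ (3 * r) ^ d :=
              Nat.pow_le_pow_left (by omega) d
            omega
        _ = 2 * 3 ^ d * r ^ d := by rw [mul_pow]; ring
    calc ((rBall d x r).ncard : ℝ) ≤ ((2 * 3 ^ d * r ^ d : ℕ) : ℝ) := by exact_mod_cast h1
      _ = 2 * 3 ^ d * (r:ℝ) ^ d := by push_cast; ring

variable (d) in
/-- the balloon set with its attaching vertex -/
def balloonSet (t : ℕ) : Set (V d) :=
  insert (Sum.inl (zpt d t)) {v | ∃ c : Cube d t, v = Sum.inr ⟨t, c⟩}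

lemma balloonSet_finite (hd0 : 0 < d) (t : ℕ) : (balloonSet d t).Finite := by
  refine (rball_finite hd0 (Sum.inl (zpt d t)) (t + 1)).subset ?_
  rintro v (rfl | ⟨c, rfl⟩)
  · show rho (Sum.inl (zpt d t)) (Sum.inl (zpt d t)) ≤ t + 1
    rw [rho_self]; omega
  · show rho (Sum.inl (zpt d t)) (Sum.inr ⟨t, c⟩) ≤ t + 1
    show nn (zpt d t - zpt d t) + nn c.1 ≤ t + 1
    rw [nn_zpt_sub_self]
    have := c.2.1
    omega

lemma balloonSet_card_ge (hd0 : 0 < d) (t : ℕ) : t ≤ (balloonSet d t).ncard := by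
  set lo : Fin d → ℤ := fun _ => 1 with hlo
  set hi : Fin d → ℤ := fun _ => (t:ℤ) + 1 with hhi
  set f : (Fin d → ℤ) → V d := fun w =>
    if hz : nn w ≤ t + 1 ∧ w ≠ 0 then Sum.inr ⟨t, ⟨w, hz⟩⟩ else Sum.inl (zpt d t) with hf
  have hcond : ∀ w ∈ Set.Icc lo hi, nn w ≤ t + 1 ∧ w ≠ 0 := by
    intro w hw
    rw [mem_Icc_pi] at hw
    constructor
    · refine nn_le fun i => ?_
      obtain ⟨h1, h2⟩ := hw i
      simp only [hlo, hhi] at h1 h2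
      omega
    · intro hzero
      obtain ⟨h1, h2⟩ := hw ⟨0, hd0⟩
      rw [hzero] at h1
      simp only [hlo, Pi.zero_apply] at h1
      omega
  have hinj : Set.InjOn f (Set.Icc lo hi) := by
    intro w1 h1 w2 h2 heq
    simp only [hf] at heq
    rw [dif_pos (hcond w1 h1), dif_pos (hcond w2 h2)] at heq
    have h3 := congrArg (ctr d) heq
    simp only [ctr] at h3
    exact add_left_cancel h3
  have hsub : f '' Set.Icc lo hi ⊆ balloonSet d t := by
    rintro - ⟨w, hw, rfl⟩
    simp only [hf]
    rw [dif_pos (hcond w hw)]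
    exact Set.mem_insert_of_mem _ ⟨_, rfl⟩
  have := ncard_ge_of_image_Icc_subset hinj (balloonSet_finite hd0 t) hsub
  refine le_trans ?_ this
  have h4 : ∀ i : Fin d, (hi i - lo i + 1).toNat = t + 1 := by
    intro i
    simp only [hlo, hhi]
    omega
  rw [Finset.prod_congr rfl fun i _ => h4 i, Finset.prod_const, Finset.card_univ,
    Fintype.card_fin]
  calc t ≤ t + 1 := by omega
    _ ≤ (t+1) ^ d := Nat.le_self_pow (by omega) _

lemma balloonSet_bdry (hd0 : 0 < d) (t : ℕ) :
    gBdry (G d) (balloonSet d t) ⊆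
      Sum.inl '' Set.Icc (zpt d t - fun _ => (1:ℤ)) (zpt d t + fun _ => (1:ℤ)) := by
  rintro w ⟨⟨a, ha, hwa⟩, ⟨b, hb, hwb⟩⟩
  rw [dist_eq] at hwa hwb
  obtain (u | ⟨m, c⟩) := w
  · -- grid vertex : get nn (u - zpt t) ≤ 1
    refine ⟨u, ?_, rfl⟩
    have hn : nn (u - zpt d t) ≤ 1 := by
      rcases Set.mem_insert_iff.mp ha with rfl | ⟨e, rfl⟩
      · exact hwa
      · have : nn (u - zpt d t) + nn e.1 ≤ 1 := hwa
        omega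
    rw [mem_Icc_pi]
    intro i
    have := natAbs_le_nn (u - zpt d t) i
    simp only [Pi.sub_apply] at this
    have e1 : ((zpt d t - fun _ => (1:ℤ)) : Fin d → ℤ) i = zpt d t i - 1 := rfl
    have e2 : ((zpt d t + fun _ => (1:ℤ)) : Fin d → ℤ) i = zpt d t i + 1 := rfl
    rw [e1, e2]
    omega
  · exfalso
    have hc1 : 1 ≤ nn c.1 := nn_pos_of_ne c.2.2
    rcases eq_or_ne m t with rfl | hmt
    · -- inner balloon vertex : but its whole neighborhood is inside A
      obtain (u' | ⟨p, e⟩) := b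
      · -- neighbor in the grid must be the attach point, which is in A
        have h1 : nn c.1 + nn (zpt d m - u') ≤ 1 := hwb
        have h2 : nn (zpt d m - u') = 0 := by omega
        have h3 : u' = zpt d m := by
          have := nn_eq_zero_iff.mp h2
          funext i
          have := congrFun this i
          simp only [Pi.sub_apply, Pi.zero_apply] at this
          omega
        exact hb (h3 ▸ Set.mem_insert _ _)
      · rcases eq_or_ne m p with rfl | hmp
        · exact hb (Set.mem_insert_of_mem _ ⟨e, rfl⟩)
        · simp only [rho, if_neg hmp] at hwb
          have he1 : 1 ≤ nn e.1 := nn_pos_of_ne e.2.2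
          omega
    · -- vertex of another balloon : not adjacent to A at all
      exfalso
      rcases Set.mem_insert_iff.mp ha with rfl | ⟨e, rfl⟩
      · have h1 : nn c.1 + nn (zpt d m - zpt d t) ≤ 1 := hwa
        have hz : 1 ≤ nn (zpt d m - zpt d t) := by
          have h5 : ((zpt d m - zpt d t) ⟨0, hd0⟩).natAbs = (aseq m - aseq t).natAbs := by
            simp [zpt]
          have h6 := natAbs_le_nn (zpt d m - zpt d t) ⟨0, hd0⟩
          have h7 := aseq_strict hmt
          omega
        omega
      · simp only [rho, if_neg hmt] at hwa
        have he1 : 1 ≤ nn e.1 := nn_pos_of_ne e.2.2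
        omega

lemma profile_le (hd0 : 0 < d) (t : ℕ) : gProfile (G d) t ≤ 3 ^ d := by
  have hbd : (gBdry (G d) (balloonSet d t)).ncard ≤ 3 ^ d := by
    have hfin : (Sum.inl '' Set.Icc (zpt d t - fun _ => (1:ℤ)) (zpt d t + fun _ => (1:ℤ)) :
        Set (V d)).Finite := (Set.finite_Icc _ _).image _
    calc (gBdry (G d) (balloonSet d t)).ncard
        ≤ (Sum.inl '' Set.Icc (zpt d t - fun _ => (1:ℤ)) (zpt d t + fun _ => (1:ℤ)) :
            Set (V d)).ncard := Set.ncard_le_ncard (balloonSet_bdry hd0 t) hfin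
      _ = (Set.Icc (zpt d t - fun _ => (1:ℤ)) (zpt d t + fun _ => (1:ℤ))).ncard :=
          Set.ncard_image_of_injective _ Sum.inl_injective
      _ = 3 ^ d := by
          rw [ncard_Icc_int]
          have h4 : ∀ i : Fin d,
              (((zpt d t + fun _ => (1:ℤ)) : Fin d → ℤ) i -
                ((zpt d t - fun _ => (1:ℤ)) : Fin d → ℤ) i + 1).toNat = 3 := by
            intro i
            have e1 : ((zpt d t - fun _ => (1:ℤ)) : Fin d → ℤ) i = zpt d t i - 1 := rfl
            have e2 : ((zpt d t + fun _ => (1:ℤ)) : Fin d → ℤ) i = zpt d t i + 1 := rfl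
            rw [e1, e2]
            omega
          rw [Finset.prod_congr rfl fun i _ => h4 i, Finset.prod_const, Finset.card_univ,
            Fintype.card_fin]
  have hmem : (gBdry (G d) (balloonSet d t)).ncard ∈
      {m : ℕ | ∃ A : Set (V d), A.Finite ∧ t ≤ A.ncard ∧ (gBdry (G d) A).ncard = m} :=
    ⟨balloonSet d t, balloonSet_finite hd0 t, balloonSet_card_ge hd0 t, rfl⟩
  exact le_trans (Nat.sInf_le hmem) hbd

lemma ballprofile_tendsto (hd : 2 ≤ d) :
    Tendsto (fun t => gBallProfile (G d) t) atTop atTop := by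
  have hd0 : 0 < d := by omega
  rw [tendsto_atTop_atTop]
  intro M
  refine ⟨2 * (4 * M + 1) ^ d + 1, fun t ht => ?_⟩
  have hne : {m : ℕ | ∃ (x : V d) (r : ℕ), 0 < r ∧ t ≤ (gBall (G d) x r).ncard ∧
      (gBdry (G d) (gBall (G d) x r)).ncard = m}.Nonempty := by
    refine ⟨_, Sum.inl 0, max t 1, by omega, ?_, rfl⟩
    rw [gBall_eq]
    have h1 := rball_card_ge hd0 (Sum.inl 0) (max t 1) (by omega)
    have h2 : max t 1 ≤ (max t 1) ^ d := Nat.le_self_pow (by omega) _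
    omega
  have hsinf := Nat.sInf_mem hne
  obtain ⟨x, r, hr, hcard, hm⟩ := hsinf
  rw [gBall_eq] at hcard hm
  -- upper bound on the ball forces r to be large
  have hub : t ≤ 2 * (2 * r + 1) ^ d := by
    have h1 := rball_card_le hd0 x r
    omega
  have hrM : 2 * M ≤ r := by
    by_contra hc
    push_neg at hc
    have h2 : 2 * r + 1 ≤ 4 * M + 1 := by omega
    have h3 : (2 * r + 1) ^ d ≤ (4 * M + 1) ^ d := Nat.pow_le_pow_left h2 d
    omega
  have hbd := bdry_card_ge hd x r hr
  show M ≤ gBallProfile (G d) t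
  rw [gBallProfile]
  omega

instance cube_countable (n : ℕ) : Countable (Cube d n) := by
  unfold Cube; infer_instance

variable (d) in
lemma countable_V : Countable (V d) := by
  unfold V; infer_instance

lemma infinite_V (hd0 : 0 < d) : Infinite (V d) := by
  refine Infinite.of_injective (fun m : ℕ => (Sum.inl (fun _ => (m:ℤ)) : V d)) ?_
  intro a b h
  have h2 : (fun _ => (a:ℤ) : Fin d → ℤ) = (fun _ => (b:ℤ)) := Sum.inl_injective h
  have := congrFun h2 ⟨0, hd0⟩
  exact_mod_cast this
end NIB

theorem exists_bounded_profile_graph_with_NIB (d : ℕ) (hd : 2 ≤ d) :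
    ∃ (V : Type) (G : SimpleGraph V), Countable V ∧ Infinite V ∧
      G.Connected ∧ BddDegree G ∧ PolyGrowth G d ∧
      (∃ M : ℕ, ∀ t : ℕ, gProfile G t ≤ M) ∧
      Tendsto (fun t => gBallProfile G t) atTop atTop := by
  have hd0 : 0 < d := by omega
  exact ⟨NIB.V d, NIB.G d, NIB.countable_V d, NIB.infinite_V hd0, NIB.connected,
    NIB.bdd_degree hd0, NIB.poly_growth hd0, ⟨3 ^ d, NIB.profile_le hd0⟩,
    NIB.ballprofile_tendsto hd⟩
end
end
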